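/- arXiv:1702.00168 — 9 statements merged into one kernel-verified Lean document; each statement's English description precedes it below -/
import Mathlib

section
/- Let ℜ₀ be any finite family of polytopes in ℝ^N. Then a cycle is eventually formed: there exist n₀ ≥ 0 and k ≥ 1 such that ℜ_{n+k} = ℜ_n for all n ≥ n₀. -/
open scoped RealInnerProductSpace
open Set

noncomputable section

/-- The ambient Euclidean space `ℝ^N`. -/
abbrev Euc (N : ℕ) : Type := EuclideanSpace ℝ (Fin N)

/-- A polytope: a nonempty convex compact subset of `ℝ^N` with finitely many extreme points. -/
def IsPolytope {N : ℕ} (Ω : Set (Euc N)) : Prop :=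
  Ω.Nonempty ∧ Convex ℝ Ω ∧ IsCompact Ω ∧ (Set.extremePoints ℝ Ω).Finite

/-- The unit sphere `S` of `ℝ^N`. -/
def sph (N : ℕ) : Set (Euc N) := Metric.sphere (0 : Euc N) 1

/-- `E(Ω,d)`: the set of `d`-active extreme points of `Ω`. -/
def activeExt {N : ℕ} (Ω : Set (Euc N)) (d : Euc N) : Set (Euc N) :=
  {x ∈ Set.extremePoints ℝ Ω | ∀ y ∈ Ω, ⟪y, d⟫ ≤ ⟪x, d⟫}

/-- `Ω_ℜ(d) = conv (⋃_{Ω ∈ ℜ} E(Ω,d))`, the dual polytope of the family `ℜ` in direction `d`. -/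
def dualPoly {N : ℕ} (ℛ : Set (Set (Euc N))) (d : Euc N) : Set (Euc N) :=
  convexHull ℝ (⋃ Ω ∈ ℛ, activeExt Ω d)

/-- The dual family `F(ℜ) = {Ω_ℜ(d) : d ∈ S}`. -/
def dualFam {N : ℕ} (ℛ : Set (Set (Euc N))) : Set (Set (Euc N)) :=
  dualPoly ℛ '' sph N

/-- `E_ℜ`, the set of extreme points of all polytopes of the family `ℜ`. -/
def extFam {N : ℕ} (ℛ : Set (Set (Euc N))) : Set (Euc N) :=
  ⋃ Ω ∈ ℛ, Set.extremePoints ℝ Ω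

/-!
Every extreme point of `Ω_ℜ(d)` is one of the generating points `E(Ω,d)`, hence `E_{F(ℜ)} ⊆ E_ℜ`.
So all the families `ℜ_n` have their extreme points in the finite set `E_{ℜ₀}`, and for `n ≥ 1`
`ℜ_n` is a family of convex hulls of subsets of `E_{ℜ₀}`. There are finitely many such families,
so the orbit of `ℜ₀` under the deterministic map `F` repeats a value and is periodic from then on.
-/

theorem Function.exists_iterate_add_eq_of_finite_orbit {α : Type*} {f : α → α} {x : α}
    {s : Set α} (hs : s.Finite) (horbit : ∀ n, f^[n] x ∈ s) :
    ∃ n₀ k : ℕ, 1 ≤ k ∧ ∀ n ≥ n₀, f^[n + k] x = f^[n] x := by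
  obtain ⟨a, b, hab, hrepeat⟩ := hs.exists_lt_map_eq_of_forall_mem horbit
  refine ⟨a, b - a, by omega, fun n hn => ?_⟩
  obtain ⟨m, rfl⟩ := Nat.exists_eq_add_of_le hn
  calc f^[a + m + (b - a)] x = f^[m] (f^[b] x) := by
        rw [← Function.iterate_add_apply]; congr 1; omega
    _ = f^[a + m] x := by rw [← hrepeat, ← Function.iterate_add_apply, Nat.add_comm]

section DualFamily

variable {N : ℕ}

lemma biUnion_activeExt_subset_extFam (ℛ : Set (Set (Euc N))) (d : Euc N) :
    ⋃ Ω ∈ ℛ, activeExt Ω d ⊆ extFam ℛ :=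
  biUnion_mono subset_rfl fun _ _ => sep_subset _ _

lemma extFam_dualFam_subset (ℛ : Set (Set (Euc N))) : extFam (dualFam ℛ) ⊆ extFam ℛ := by
  simp only [extFam, dualFam, biUnion_image, iUnion_subset_iff]
  intro d _
  exact (extremePoints_convexHull_subset).trans (biUnion_activeExt_subset_extFam ℛ d)

lemma extFam_iterate_dualFam_subset (ℛ : Set (Set (Euc N))) (n : ℕ) :
    extFam (dualFam^[n] ℛ) ⊆ extFam ℛ := by
  induction n with
  | zero => rfl
  | succ n ih =>
    rw [Function.iterate_succ_apply']
    exact (extFam_dualFam_subset _).trans ih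

lemma dualFam_subset_image_convexHull (ℛ : Set (Set (Euc N))) :
    dualFam ℛ ⊆ convexHull ℝ '' 𝒫 extFam ℛ := by
  rintro _ ⟨d, -, rfl⟩
  exact ⟨_, biUnion_activeExt_subset_extFam ℛ d, rfl⟩

lemma iterate_dualFam_mem (ℛ : Set (Set (Euc N))) (n : ℕ) :
    dualFam^[n] ℛ ∈ insert ℛ (𝒫 (convexHull ℝ '' 𝒫 extFam ℛ)) := by
  cases n with
  | zero => exact mem_insert ℛ _
  | succ n =>
    rw [Function.iterate_succ_apply']
    refine mem_insert_of_mem _ ((dualFam_subset_image_convexHull _).trans ?_)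
    exact image_mono (powerset_mono.mpr (extFam_iterate_dualFam_subset ℛ n))

lemma extFam_finite {ℛ : Set (Set (Euc N))} (hfin : ℛ.Finite)
    (hpoly : ∀ Ω ∈ ℛ, IsPolytope Ω) : (extFam ℛ).Finite :=
  hfin.biUnion fun Ω hΩ => (hpoly Ω hΩ).2.2.2

end DualFamily

/-- a cycle is eventually formed. -/
theorem eventually_cycle {N : ℕ} (ℛ₀ : Set (Set (Euc N))) (hfin : ℛ₀.Finite)
    (hpoly : ∀ Ω ∈ ℛ₀, IsPolytope Ω) :
    ∃ n₀ k : ℕ, 1 ≤ k ∧ ∀ n ≥ n₀, dualFam^[n + k] ℛ₀ = dualFam^[n] ℛ₀ := by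
  have hfamilies : (insert ℛ₀ (𝒫 (convexHull ℝ '' 𝒫 extFam ℛ₀))).Finite :=
    (((extFam_finite hfin hpoly).powerset.image _).powerset).insert ℛ₀
  exact Function.exists_iterate_add_eq_of_finite_orbit hfamilies (iterate_dualFam_mem ℛ₀)
end
end

section
/- (The Demyanov–Ryabova conjecture holds in dimension 1.) Let ℜ₀ be a finite family of closed bounded intervals of ℝ (nonempty closed bounded intervals, i.e. polytopes in ℝ). Then ℜ₁ = ℜ₃, where ℜ₁ = F(ℜ₀), ℜ₂ = F(ℜ₁), ℜ₃ = F(ℜ₂). -/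
/-!
In `ℝ` the sphere is `{1, -1}`, so a dual family consists of (at most) two intervals: the hull
of the right endpoints and the hull of the left endpoints. If `ℜ₁ = {[q, p], [o, r]}`, then
`o ≤ q` and `r ≤ p`, because the left endpoint of each interval lies below its right endpoint.
Hence `ℜ₂ = {[r, p], [o, q]}` and `ℜ₃ = {[q, p], [o, r]} = ℜ₁`.
-/

open scoped RealInnerProductSpace
open Set

noncomputable section

open Function

namespace DemyanovRyabova

section ActiveExt

variable {N : ℕ} {Ω : Set (Euc N)} {d : Euc N}

/-- Maximisers of an injective functional are exposed, hence extreme, points. -/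
theorem activeExt_eq_of_injective (hd : Injective fun x : Euc N => ⟪x, d⟫) :
    activeExt Ω d = {x ∈ Ω | ∀ y ∈ Ω, ⟪y, d⟫ ≤ ⟪x, d⟫} := by
  refine Subset.antisymm (fun x hx => ⟨hx.1.1, hx.2⟩) fun x hx => ⟨?_, hx.2⟩
  refine exposedPoints_subset_extremePoints ⟨hx.1, innerSL ℝ d, fun y hy => ?_⟩
  simp only [innerSL_apply_apply, real_inner_comm _ d]
  exact ⟨hx.2 y hy, fun h => hd (le_antisymm (hx.2 y hy) h)⟩

theorem activeExt_subsingleton (hd : Injective fun x : Euc N => ⟪x, d⟫) :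
    (activeExt Ω d).Subsingleton := fun x hx y hy =>
  hd (le_antisymm (hy.2 x hx.1.1) (hx.2 y hy.1.1))

theorem activeExt_nonempty (hd : Injective fun x : Euc N => ⟪x, d⟫) (hc : IsCompact Ω)
    (hne : Ω.Nonempty) : (activeExt Ω d).Nonempty := by
  have hcont : Continuous fun x : Euc N => ⟪x, d⟫ := by fun_prop
  obtain ⟨x, hx, hmax⟩ := hc.exists_isMaxOn hne hcont.continuousOn
  rw [activeExt_eq_of_injective hd]
  exact ⟨x, hx, fun y hy => hmax hy⟩

end ActiveExt

def unitVec : Euc 1 := EuclideanSpace.single 0 1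

@[simp]
theorem unitVec_apply_zero : unitVec 0 = 1 := by
  simp [unitVec]

theorem eq_iff_apply_zero {x y : Euc 1} : x = y ↔ x 0 = y 0 := by
  refine ⟨fun h => h ▸ rfl, fun h => ?_⟩
  ext i
  fin_cases i
  exact h

@[simp]
theorem inner_unitVec (x : Euc 1) : ⟪x, unitVec⟫ = x 0 := by
  simp [unitVec, EuclideanSpace.inner_single_right]

theorem inner_unitVec_injective : Injective fun x : Euc 1 => ⟪x, unitVec⟫ := fun x y h =>
  eq_iff_apply_zero.2 (by simpa using h)

theorem inner_neg_unitVec_injective : Injective fun x : Euc 1 => ⟪x, -unitVec⟫ := fun x y h =>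
  eq_iff_apply_zero.2 (by simpa using h)

theorem sph_one : sph 1 = {unitVec, -unitVec} := by
  ext d
  have hnorm : ‖d‖ = |d 0| := by simp [EuclideanSpace.norm_eq, Real.sqrt_sq_eq_abs]
  simp [sph, hnorm, abs_eq zero_le_one, eq_iff_apply_zero (x := d)]

theorem dualFam_eq_pair (ℛ : Set (Set (Euc 1))) :
    dualFam ℛ = {dualPoly ℛ unitVec, dualPoly ℛ (-unitVec)} := by
  rw [dualFam, sph_one, image_pair]

variable {Ω T : Set (Euc 1)} {x y q p o r : Euc 1}

theorem mem_activeExt_unitVec :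
    x ∈ activeExt Ω unitVec ↔ x ∈ Ω ∧ ∀ y ∈ Ω, y 0 ≤ x 0 := by
  simp [activeExt_eq_of_injective inner_unitVec_injective]

theorem mem_activeExt_neg_unitVec :
    x ∈ activeExt Ω (-unitVec) ↔ x ∈ Ω ∧ ∀ y ∈ Ω, x 0 ≤ y 0 := by
  simp [activeExt_eq_of_injective inner_neg_unitVec_injective]

theorem apply_zero_le_of_mem_activeExt (hx : x ∈ activeExt Ω (-unitVec))
    (hy : y ∈ activeExt Ω unitVec) : x 0 ≤ y 0 :=
  (mem_activeExt_neg_unitVec.1 hx).2 y (mem_activeExt_unitVec.1 hy).1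

theorem mem_segment_iff_apply_zero (h : q 0 ≤ p 0) :
    x ∈ segment ℝ q p ↔ q 0 ≤ x 0 ∧ x 0 ≤ p 0 := by
  have hinj : Injective (EuclideanSpace.projₗ (𝕜 := ℝ) (0 : Fin 1)) := fun _ _ =>
    eq_iff_apply_zero.2
  rw [← hinj.mem_set_image, ← LinearMap.coe_toAffineMap, image_segment]
  exact Set.ext_iff.1 (segment_eq_Icc h) (x 0)

theorem activeExt_segment_unitVec (h : q 0 ≤ p 0) :
    activeExt (segment ℝ q p) unitVec = {p} := by
  ext x
  simp only [mem_activeExt_unitVec, mem_segment_iff_apply_zero h, mem_singleton_iff]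
  refine ⟨fun hx => eq_iff_apply_zero.2 (le_antisymm hx.1.2 (hx.2 p ⟨h, le_rfl⟩)), ?_⟩
  rintro rfl
  exact ⟨⟨h, le_rfl⟩, fun y hy => hy.2⟩

theorem activeExt_segment_neg_unitVec (h : q 0 ≤ p 0) :
    activeExt (segment ℝ q p) (-unitVec) = {q} := by
  ext x
  simp only [mem_activeExt_neg_unitVec, mem_segment_iff_apply_zero h, mem_singleton_iff]
  refine ⟨fun hx => eq_iff_apply_zero.2 (le_antisymm (hx.2 q ⟨le_rfl, h⟩) hx.1.1), ?_⟩
  rintro rfl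
  exact ⟨⟨le_rfl, h⟩, fun y hy => hy.1⟩

theorem dualFam_pair_segment (hqp : q 0 ≤ p 0) (hor : o 0 ≤ r 0) :
    dualFam {segment ℝ q p, segment ℝ o r} = {segment ℝ p r, segment ℝ q o} := by
  simp only [dualFam_eq_pair, dualPoly, biUnion_insert, biUnion_singleton,
    activeExt_segment_unitVec, activeExt_segment_neg_unitVec, hqp, hor, singleton_union,
    convexHull_pair]

theorem dualFam_dualFam_pair_segment (hqp : q 0 ≤ p 0) (hor : o 0 ≤ r 0) (hoq : o 0 ≤ q 0)
    (hrp : r 0 ≤ p 0) :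
    dualFam (dualFam {segment ℝ q p, segment ℝ o r}) = {segment ℝ q p, segment ℝ o r} := by
  rw [dualFam_pair_segment hqp hor, segment_symm ℝ p r, segment_symm ℝ q o,
    dualFam_pair_segment hrp hoq, segment_symm ℝ p q, segment_symm ℝ r o]

theorem convexHull_eq_segment (hq : q ∈ T) (hp : p ∈ T)
    (hT : ∀ x ∈ T, q 0 ≤ x 0 ∧ x 0 ≤ p 0) : convexHull ℝ T = segment ℝ q p := by
  refine Subset.antisymm (convexHull_min (fun x hx => ?_) (convex_segment q p)) ?_
  · exact (mem_segment_iff_apply_zero (hT p hp).1).2 (hT x hx)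
  · exact (convex_convexHull ℝ T).segment_subset (subset_convexHull ℝ T hq)
      (subset_convexHull ℝ T hp)

theorem exists_convexHull_eq_segment (hT : T.Finite) (hne : T.Nonempty) :
    ∃ q ∈ T, ∃ p ∈ T,
      (∀ x ∈ T, q 0 ≤ x 0 ∧ x 0 ≤ p 0) ∧ convexHull ℝ T = segment ℝ q p := by
  obtain ⟨q, hq, hmin⟩ := T.exists_min_image (· 0) hT hne
  obtain ⟨p, hp, hmax⟩ := T.exists_max_image (· 0) hT hne
  have hbounds : ∀ x ∈ T, q 0 ≤ x 0 ∧ x 0 ≤ p 0 := fun x hx => ⟨hmin x hx, hmax x hx⟩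
  exact ⟨q, hq, p, hp, hbounds, convexHull_eq_segment hq hp hbounds⟩


theorem dualFam_of_forall_eq_empty {ℛ : Set (Set (Euc 1))} (h : ∀ Ω ∈ ℛ, Ω = ∅) :
    dualFam ℛ = {∅} := by
  have hpoly : ∀ d, dualPoly ℛ d = ∅ := fun d => by
    simp only [dualPoly, convexHull_eq_empty, iUnion_eq_empty]
    exact fun Ω hΩ => subset_empty_iff.1 fun x hx => (h Ω hΩ).subset hx.1.1
  rw [dualFam_eq_pair, hpoly, hpoly, pair_eq_singleton]

theorem exists_dualFam_eq_pair_segment {ℛ : Set (Set (Euc 1))} (hfin : ℛ.Finite)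
    (hne : ℛ.Nonempty) (hΩ : ∀ Ω ∈ ℛ, IsCompact Ω ∧ Ω.Nonempty) :
    ∃ q p o r : Euc 1, q 0 ≤ p 0 ∧ o 0 ≤ r 0 ∧ o 0 ≤ q 0 ∧ r 0 ≤ p 0 ∧
      dualFam ℛ = {segment ℝ q p, segment ℝ o r} := by
  have htop : ∀ Ω ∈ ℛ, (activeExt Ω unitVec).Nonempty := fun Ω h =>
    activeExt_nonempty inner_unitVec_injective (hΩ Ω h).1 (hΩ Ω h).2
  have hbot : ∀ Ω ∈ ℛ, (activeExt Ω (-unitVec)).Nonempty := fun Ω h =>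
    activeExt_nonempty inner_neg_unitVec_injective (hΩ Ω h).1 (hΩ Ω h).2
  set tops := ⋃ Ω ∈ ℛ, activeExt Ω unitVec
  set bots := ⋃ Ω ∈ ℛ, activeExt Ω (-unitVec)
  obtain ⟨Ω₀, hΩ₀⟩ := hne
  obtain ⟨q, hq, p, hp, htops, hconv⟩ := exists_convexHull_eq_segment
    (hfin.biUnion fun _ _ => (activeExt_subsingleton inner_unitVec_injective).finite)
    ((htop Ω₀ hΩ₀).mono (subset_biUnion_of_mem hΩ₀) : tops.Nonempty)
  obtain ⟨o, ho, r, hr, hbots, hconv'⟩ := exists_convexHull_eq_segment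
    (hfin.biUnion fun _ _ => (activeExt_subsingleton inner_neg_unitVec_injective).finite)
    ((hbot Ω₀ hΩ₀).mono (subset_biUnion_of_mem hΩ₀) : bots.Nonempty)
  have hoq : o 0 ≤ q 0 := by
    obtain ⟨Ω, hΩ, hqΩ⟩ := mem_iUnion₂.1 hq
    obtain ⟨b, hb⟩ := hbot Ω hΩ
    exact (hbots b (mem_biUnion hΩ hb)).1.trans (apply_zero_le_of_mem_activeExt hb hqΩ)
  have hrp : r 0 ≤ p 0 := by
    obtain ⟨Ω, hΩ, hrΩ⟩ := mem_iUnion₂.1 hr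
    obtain ⟨t, ht⟩ := htop Ω hΩ
    exact (apply_zero_le_of_mem_activeExt hrΩ ht).trans (htops t (mem_biUnion hΩ ht)).2
  exact ⟨q, p, o, r, (htops p hp).1, (hbots r hr).1, hoq, hrp,
    by rw [dualFam_eq_pair, dualPoly, dualPoly, hconv, hconv']⟩

end DemyanovRyabova

open DemyanovRyabova

/-- the Demyanov–Ryabova conjecture in dimension 1: for a finite family of
closed bounded intervals of `ℝ` (i.e. polytopes in `ℝ`), `ℜ₁ = ℜ₃`. -/
theorem demyanov_ryabova_dim_one (ℛ₀ : Set (Set (Euc 1))) (hfin : ℛ₀.Finite)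
    (hpoly : ∀ Ω ∈ ℛ₀, IsPolytope Ω) :
    dualFam^[1] ℛ₀ = dualFam^[3] ℛ₀ := by
  change dualFam ℛ₀ = dualFam (dualFam (dualFam ℛ₀))
  rcases ℛ₀.eq_empty_or_nonempty with rfl | hne
  · have hempty : dualFam ({∅} : Set (Set (Euc 1))) = {∅} :=
      dualFam_of_forall_eq_empty fun _ => id
    rw [dualFam_of_forall_eq_empty (by simp), hempty, hempty]
  · obtain ⟨q, p, o, r, hqp, hor, hoq, hrp, h⟩ := exists_dualFam_eq_pair_segment hfin hne
      fun Ω hΩ => ⟨(hpoly Ω hΩ).2.2.1, (hpoly Ω hΩ).1⟩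
    rw [h, dualFam_dualFam_pair_segment hqp hor hoq hrp]
end
end

section
/- Let E ⊆ ℝ^N be a finite set satisfying (H1) and set C = conv(E). Then for every x̄ ∈ E the normal cone N_C(x̄) has nonempty interior, and every direction d ∈ S ∩ int N_C(x̄) strictly exposes x̄ in C: ⟨y,d⟩ < ⟨x̄,d⟩ for every y ∈ E with y ≠ x̄ (equivalently, any d-compatible enumeration of E strictly locates x̄ at the R-position). -/
/-!
A hyperplane strictly separating `xbar` from the compact set `conv (E \ {xbar})` gives a direction
`d₀` with `⟪d₀, y - xbar⟫ < 0` for all `y ∈ E \ {xbar}`; these finitely many strict inequalities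
persist on a neighbourhood of `d₀`, which lies in the normal cone. Conversely, if `d` is interior to
the normal cone then so is `d + t • (y - xbar)` for small `t > 0`, and testing it against `y` gives
`⟪d, y - xbar⟫ ≤ -t ‖y - xbar‖² < 0`.
-/

open scoped RealInnerProductSpace
open Set

noncomputable section

/-- The normal cone `N_C(x) = {d : ⟨d, y - x⟩ ≤ 0 for all y ∈ C}`. -/
def normalCone {N : ℕ} (C : Set (Euc N)) (x : Euc N) : Set (Euc N) :=
  {d : Euc N | ∀ y ∈ C, ⟪d, y - x⟫ ≤ 0}

open Filter Topology

theorem normalCone_convexHull {N : ℕ} (s : Set (Euc N)) (x : Euc N) :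
    normalCone (convexHull ℝ s) x = normalCone s x := by
  refine Subset.antisymm (fun d hd y hy => hd y (subset_convexHull ℝ s hy)) fun d hd => ?_
  have hhalf : Convex ℝ {y : Euc N | ⟪d, y⟫ ≤ ⟪d, x⟫} :=
    convex_halfSpace_le ⟨inner_add_right d, fun c y => real_inner_smul_right d y c⟩ _
  have hsub : convexHull ℝ s ⊆ {y | ⟪d, y⟫ ≤ ⟪d, x⟫} :=
    convexHull_min (fun y hy => by simpa [inner_sub_right] using hd y hy) hhalf
  intro y hy
  simpa [inner_sub_right] using hsub hy

theorem exists_inner_sub_neg_of_notMem_convexHull {F : Type*} [NormedAddCommGroup F]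
    [InnerProductSpace ℝ F] [CompleteSpace F] {s : Set F} (hs : s.Finite) {x : F}
    (hx : x ∉ convexHull ℝ s) : ∃ d : F, ∀ y ∈ s, ⟪d, y - x⟫ < 0 := by
  obtain ⟨f, u, hfs, hfx⟩ := geometric_hahn_banach_closed_point (convex_convexHull ℝ s)
    (hs.isCompact_convexHull (𝕜 := ℝ)).isClosed hx
  refine ⟨(InnerProductSpace.toDual ℝ F).symm f, fun y hy => ?_⟩
  rw [inner_sub_right, InnerProductSpace.toDual_symm_apply, InnerProductSpace.toDual_symm_apply]
  linarith [hfs y (subset_convexHull ℝ s hy)]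

theorem interior_normalCone_convexHull_nonempty {N : ℕ} {s : Set (Euc N)} (hs : s.Finite)
    {x : Euc N} (hx : x ∉ convexHull ℝ (s \ {x})) :
    (interior (normalCone (convexHull ℝ s) x)).Nonempty := by
  obtain ⟨d, hd⟩ := exists_inner_sub_neg_of_notMem_convexHull hs.sdiff hx
  let U : Set (Euc N) := ⋂ y ∈ s \ {x}, {e | ⟪e, y - x⟫ < 0}
  have hUopen : IsOpen U :=
    hs.sdiff.isOpen_biInter fun y _ => isOpen_lt (continuous_id.inner continuous_const)
      continuous_const
  have hUcone : U ⊆ normalCone (convexHull ℝ s) x := by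
    rw [normalCone_convexHull]
    intro e he y hy
    rcases eq_or_ne y x with rfl | hyx
    · simp
    · exact (mem_iInter₂.mp he y ⟨hy, hyx⟩).le
  exact ⟨d, interior_maximal hUcone hUopen (mem_iInter₂.mpr hd)⟩

theorem inner_lt_of_mem_interior_normalCone {N : ℕ} {C : Set (Euc N)} {x d : Euc N}
    (hd : d ∈ interior (normalCone C x)) {y : Euc N} (hy : y ∈ C) (hyx : y ≠ x) :
    ⟪y, d⟫ < ⟪x, d⟫ := by
  have hyx' : 0 < ‖y - x‖ := norm_pos_iff.mpr (sub_ne_zero.mpr hyx)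
  have hcont : Continuous fun t : ℝ => d + t • (y - x) := by fun_prop
  have hnear : ∀ᶠ t : ℝ in 𝓝 0, d + t • (y - x) ∈ normalCone C x :=
    hcont.tendsto' 0 d (by simp) |>.eventually (mem_interior_iff_mem_nhds.mp hd)
  obtain ⟨t, ht, htcone⟩ :=
    (eventually_mem_nhdsWithin.and (hnear.filter_mono nhdsWithin_le_nhds) :
      ∀ᶠ t : ℝ in 𝓝[>] 0, t ∈ Ioi 0 ∧ d + t • (y - x) ∈ normalCone C x).exists
  have htest : ⟪d, y - x⟫ + t * ‖y - x‖ ^ 2 ≤ 0 := by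
    simpa only [inner_add_left, real_inner_smul_left, real_inner_self_eq_norm_sq]
      using htcone y hy
  have hdyx : ⟪d, y - x⟫ < 0 := by linarith [mul_pos (mem_Ioi.mp ht) (pow_pos hyx' 2)]
  rw [inner_sub_right] at hdyx
  rw [real_inner_comm d y, real_inner_comm d x]
  linarith

/-- under (H1), for every `xbar ∈ E` the normal cone `N_C(xbar)` has nonempty
interior, and every `d ∈ S ∩ int N_C(xbar)` strictly exposes `xbar` in `C`. -/
theorem normal_cone_interior_strictly_exposes {N : ℕ} (E : Set (Euc N)) (hEfin : E.Finite)
    (H1 : ∀ x ∈ E, x ∉ convexHull ℝ (E \ {x}))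
    (C : Set (Euc N)) (hC : C = convexHull ℝ E)
    (xbar : Euc N) (hxbar : xbar ∈ E) :
    (interior (normalCone C xbar)).Nonempty ∧
      ∀ d ∈ sph N ∩ interior (normalCone C xbar),
        ∀ y ∈ E, y ≠ xbar → ⟪y, d⟫ < ⟪xbar, d⟫ := by
  subst hC
  refine ⟨interior_normalCone_convexHull_nonempty hEfin (H1 xbar hxbar), ?_⟩
  rintro d ⟨-, hd⟩ y hy hne
  exact inner_lt_of_mem_interior_normalCone hd (subset_convexHull ℝ E hy) hne
end
end

section
/- (Uniform control lemma.) Let E ⊆ ℝ^N be a finite set satisfying (H1), C = conv(E), and fix a selection x ∈ E ↦ e_x ∈ S ∩ int N_C(x). Then there exist constants M > 0 and m > 0 such that for every d ∈ S and every x ∈ E, the map D_x(t) = d + t·e_x satisfies: (ii) for all t > 0 large enough, ⟨x, D_x(t)⟩ > ⟨y, D_x(t)⟩ for all y ∈ E with y ≠ x, and for all t < 0 with |t| large enough, ⟨x, D_x(t)⟩ < ⟨y, D_x(t)⟩ for all y ∈ E with y ≠ x; (iii) |⟨y₁ − y₂, D_x(t) − d⟩| ≤ M|t| for all y₁, y₂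 ∈ E and t ∈ ℝ; (iv) |⟨x − y, D_x(t) − d⟩| ≥ m|t| for all y ∈ E with y ≠ x and all t ∈ ℝ. -/
/-! Since `e x` is interior to the normal cone at `x`, `⟪x - y, e x⟫ > 0` for every other
`y ∈ E`; finiteness of `E` bounds these gaps below by a uniform `m > 0`, and `M = diam E + 1`
bounds every `⟪y₁ - y₂, e x⟫` and `⟪y₁ - y₂, d⟫` for unit `d`. Hence along `d + t • e x` the
term `t ⟪x - y, e x⟫` dominates as soon as `|t| ≥ M / m`. -/

open scoped RealInnerProductSpace
open Set

noncomputable section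

open Filter Topology

lemma Set.Finite.exists_pos_forall_le {α : Type*} {s : Set α} (hs : Set.Finite s) {f : α → ℝ}
    (hf : ∀ a ∈ s, 0 < f a) : ∃ m > 0, ∀ a ∈ s, m ≤ f a := by
  rcases s.eq_empty_or_nonempty with rfl | hne
  · exact ⟨1, one_pos, by simp⟩
  · obtain ⟨a, ha, hmin⟩ := s.exists_min_image f hs hne
    exact ⟨f a, hf a ha, hmin⟩

lemma inner_sub_pos_of_mem_interior_normalCone {N : ℕ} {C : Set (Euc N)} {x y u : Euc N}
    (hyC : y ∈ C) (hyx : y ≠ x) (hu : u ∈ interior (normalCone C x)) : 0 < ⟪x - y, u⟫ := by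
  have hv : 0 < ‖y - x‖ ^ 2 := by positivity [sub_ne_zero.mpr hyx]
  -- `u` is interior, so `u + c • (y - x)` is still normal for small `c > 0`; pairing it with
  -- `y - x` gives `⟪u, y - x⟫ ≤ -c ‖y - x‖²`.
  have hpert : ∀ᶠ c : ℝ in 𝓝[>] 0, u + c • (y - x) ∈ normalCone C x := by
    refine nhdsWithin_le_nhds (ContinuousAt.preimage_mem_nhds (by fun_prop) ?_)
    simpa using mem_interior_iff_mem_nhds.mp hu
  obtain ⟨c, hcC, hc⟩ := (hpert.and self_mem_nhdsWithin).exists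
  have := hcC y hyC
  rw [inner_add_left, real_inner_smul_left, real_inner_self_eq_norm_sq] at this
  rw [← neg_sub y x, inner_neg_left, real_inner_comm]
  nlinarith [mul_pos hc hv]

lemma inner_add_smul_pos {N : ℕ} {v u d : Euc N} {M m t : ℝ} (hd : ‖d‖ = 1) (hvM : ‖v‖ < M)
    (hm : 0 < m) (hmv : m ≤ ⟪v, u⟫) (ht : M / m ≤ t) : 0 < ⟪v, d + t • u⟫ := by
  have hMt : M ≤ t * m := (div_le_iff₀ hm).mp ht
  have ht0 : 0 ≤ t := (div_pos ((norm_nonneg v).trans_lt hvM) hm).le.trans ht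
  have hvd : -‖v‖ ≤ ⟪v, d⟫ := by
    simpa [hd] using neg_le_of_abs_le (abs_real_inner_le_norm v d)
  have : t * m ≤ t * ⟪v, u⟫ := mul_le_mul_of_nonneg_left hmv ht0
  rw [inner_add_right, real_inner_smul_right]
  linarith

theorem uniform_control_general {N : ℕ} (E : Set (Euc N)) (hEfin : E.Finite)
    (C : Set (Euc N)) (hC : C = convexHull ℝ E)
    (e : Euc N → Euc N) (he : ∀ x ∈ E, e x ∈ sph N ∩ interior (normalCone C x)) :
    ∃ M > (0 : ℝ), ∃ m > (0 : ℝ), ∀ d ∈ sph N, ∀ x ∈ E,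
      ((∃ T > (0 : ℝ), ∀ t ≥ T, ∀ y ∈ E, y ≠ x →
          ⟪y, d + t • e x⟫ < ⟪x, d + t • e x⟫) ∧
        (∃ T < (0 : ℝ), ∀ t ≤ T, ∀ y ∈ E, y ≠ x →
          ⟪x, d + t • e x⟫ < ⟪y, d + t • e x⟫)) ∧
      (∀ y₁ ∈ E, ∀ y₂ ∈ E, ∀ t : ℝ,
        |⟪y₁ - y₂, (d + t • e x) - d⟫| ≤ M * |t|) ∧
      (∀ y ∈ E, y ≠ x → ∀ t : ℝ,
        m * |t| ≤ |⟪x - y, (d + t • e x) - d⟫|) := by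
  obtain ⟨m, hm, hm_le⟩ := Set.Finite.exists_pos_forall_le
    ((hEfin.prod hEfin).inter_of_left {p : Euc N × Euc N | p.2 ≠ p.1})
    (f := fun p ↦ ⟪p.1 - p.2, e p.1⟫) fun p ⟨⟨hp₁, hp₂⟩, hne⟩ ↦
      inner_sub_pos_of_mem_interior_normalCone (hC ▸ subset_convexHull ℝ E hp₂) hne (he _ hp₁).2
  set M := Metric.diam E + 1
  have hdiam : ∀ y₁ ∈ E, ∀ y₂ ∈ E, ‖y₁ - y₂‖ < M := fun y₁ hy₁ y₂ hy₂ ↦ by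
    rw [← dist_eq_norm]; linarith [Metric.dist_le_diam_of_mem hEfin.isBounded hy₁ hy₂]
  have hM : 0 < M := by positivity
  refine ⟨M, hM, m, hm, fun d hd x hx ↦ ?_⟩
  have hd : ‖d‖ = 1 := by simpa [sph] using hd
  have hex : ‖e x‖ = 1 := by simpa [sph] using (he x hx).1
  have hmx : ∀ y ∈ E, y ≠ x → m ≤ ⟪x - y, e x⟫ := fun y hy hyx ↦ hm_le (x, y) ⟨⟨hx, hy⟩, hyx⟩
  simp only [add_sub_cancel_left, real_inner_smul_right, abs_mul]
  refine ⟨⟨⟨M / m, by positivity, fun t ht y hy hyx ↦ ?_⟩,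
    ⟨-(M / m), by simp only [Left.neg_neg_iff]; positivity, fun t ht y hy hyx ↦ ?_⟩⟩,
    fun y₁ hy₁ y₂ hy₂ t ↦ ?_, fun y hy hyx t ↦ ?_⟩
  · have := inner_add_smul_pos hd (hdiam x hx y hy) hm (hmx y hy hyx) ht
    rw [inner_sub_left] at this
    linarith
  · have := inner_add_smul_pos (d := -d) (t := -t) (by rwa [norm_neg]) (hdiam x hx y hy) hm
      (hmx y hy hyx) (le_neg.mpr ht)
    rw [neg_smul, ← neg_add, inner_neg_right, inner_sub_left] at this
    linarith
  · rw [mul_comm M]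
    gcongr
    have := abs_real_inner_le_norm (y₁ - y₂) (e x)
    rw [hex, mul_one] at this
    exact this.trans (hdiam y₁ hy₁ y₂ hy₂).le
  · rw [mul_comm]
    exact mul_le_mul_of_nonneg_left ((hmx y hy hyx).trans (le_abs_self _)) (abs_nonneg t)

/-- Uniform control lemma. -/
theorem uniform_control {N : ℕ} (E : Set (Euc N)) (hEfin : E.Finite)
    (H1 : ∀ x ∈ E, x ∉ convexHull ℝ (E \ {x}))
    (C : Set (Euc N)) (hC : C = convexHull ℝ E)
    (e : Euc N → Euc N) (he : ∀ x ∈ E, e x ∈ sph N ∩ interior (normalCone C x)) :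
    ∃ M > (0 : ℝ), ∃ m > (0 : ℝ), ∀ d ∈ sph N, ∀ x ∈ E,
      ((∃ T > (0 : ℝ), ∀ t ≥ T, ∀ y ∈ E, y ≠ x →
          ⟪y, d + t • e x⟫ < ⟪x, d + t • e x⟫) ∧
        (∃ T < (0 : ℝ), ∀ t ≤ T, ∀ y ∈ E, y ≠ x →
          ⟪x, d + t • e x⟫ < ⟪y, d + t • e x⟫)) ∧
      (∀ y₁ ∈ E, ∀ y₂ ∈ E, ∀ t : ℝ,
        |⟪y₁ - y₂, (d + t • e x) - d⟫| ≤ M * |t|) ∧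
      (∀ y ∈ E, y ≠ x → ∀ t : ℝ,
        m * |t| ≤ |⟪x - y, (d + t • e x) - d⟫|) :=
  uniform_control_general E hEfin C hC e he
end
end

section
/- (Strict location in the very next position.) Let E ⊆ ℝ^N (N ≥ 2) be a finite set of R points satisfying (H1). Let {x_j}_{j=1}^R be a d-compatible enumeration of E for some d ∈ S, and suppose for some 1 ≤ i ≤ R−1 that ⟨x_{i−1},d⟩ < ⟨x_i,d⟩ ≤ ⟨x_{i+1},d⟩ (the left inequality vacuous if i = 1). Then there exist a direction d′ ∈ S and a d′-compatible enumeration {y_j}_{j=1}^R of E such that {x_1,…,x_{i−1}} ⊆ {y_1,…,y_i}, y_{i+1} = x_i, and ⟨y_i,d′⟩ < ⟨y_{i+1},d′⟩ < ⟨y_{i+2},d′⟩ (i.e. d′ strictly locates x_i at the (i+1)-position). -/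
open scoped RealInnerProductSpace
open Set

noncomputable section

/-- A `d`-compatible enumeration of a finite set `E` of cardinality `R`:
an enumeration `x 0, x 1, …, x (R-1)` of `E` with `⟪x 0, d⟫ ≤ ⟪x 1, d⟫ ≤ ⋯ ≤ ⟪x (R-1), d⟫`. -/
def IsCompatEnum {N : ℕ} (E : Set (Euc N)) (R : ℕ) (d : Euc N) (x : ℕ → Euc N) : Prop :=
  Set.InjOn x (Set.Iio R) ∧ x '' (Set.Iio R) = E ∧
    ∀ i j : ℕ, i ≤ j → j < R → ⟪x i, d⟫ ≤ ⟪x j, d⟫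

/-! Since `x i` is a vertex of `conv E`, some direction `ℓ` puts every other point of `E` strictly
above it. Tilting `d` slightly towards `ℓ` keeps `x 0, …, x (i-1)` strictly below `x i` and puts
all remaining points strictly above. Now rotate this direction towards `-ℓ`: the points above
`x i` drop below its level one at a time, provided `ℓ` is chosen generically (a tie would make
two of them positively proportional as seen from `x i`, contradicting (H1)). Stopping right after
the first crossing leaves exactly `i + 1` points strictly below `x i` and the others strictly
above, so `x i` is strictly located at position `i + 1`. -/

open Filter Topology

theorem Set.Finite.exists_lt_forall_lt_of_injOn {α β : Type*} [LinearOrder β] [TopologicalSpace β]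
    [OrderTopology β] [DenselyOrdered β] [NoMaxOrder β] {s : Set α} (hs : s.Finite)
    (hne : s.Nonempty) {t : α → β} (ht : InjOn t s) :
    ∃ z ∈ s, ∃ τ, t z < τ ∧ ∀ w ∈ s, w ≠ z → τ < t w := by
  obtain ⟨z, hz, hmin⟩ := exists_min_image s t hs hne
  have hgap : ∀ᶠ τ in 𝓝[>] t z, τ ∈ Ioi (t z) ∧ ∀ w ∈ s \ {z}, τ < t w :=
    eventually_mem_nhdsWithin.and <| hs.sdiff.eventually_all.2 fun w hw =>
      nhdsWithin_le_nhds <| eventually_lt_nhds <|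
        (hmin w hw.1).lt_of_ne fun h => hw.2 (ht hw.1 hz h.symm)
  obtain ⟨τ, hzτ, hτ⟩ := hgap.exists
  exact ⟨z, hz, τ, hzτ, fun w hw hwz => hτ w ⟨hw, hwz⟩⟩

section InnerProductSpace

variable {V : Type*} [NormedAddCommGroup V] [InnerProductSpace ℝ V]

/-- `d` strictly locates `v` right after the points of `L`: every `d`-compatible enumeration of `E`
lists `L`, then `v`, then the rest of `E`, with strict gaps on both sides of `v`. -/
def IsStrictCut (E L : Set V) (v d : V) : Prop :=
  (∀ u ∈ L, ⟪u, d⟫ < ⟪v, d⟫) ∧ ∀ u ∈ E \ insert v L, ⟪v, d⟫ < ⟪u, d⟫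

namespace IsStrictCut

variable {E L : Set V} {u v d : V}

theorem inner_lt_iff (h : IsStrictCut E L v d) (hu : u ∈ E) : ⟪u, d⟫ < ⟪v, d⟫ ↔ u ∈ L := by
  refine ⟨fun hlt => ?_, h.1 u⟩
  by_contra huL
  rcases eq_or_ne u v with rfl | huv
  · exact lt_irrefl _ hlt
  · exact (h.2 u ⟨hu, by simp [huv, huL]⟩).not_gt hlt

theorem inner_le_iff (h : IsStrictCut E L v d) (hu : u ∈ E) :
    ⟪u, d⟫ ≤ ⟪v, d⟫ ↔ u ∈ insert v L := by
  refine ⟨fun hle => ?_, ?_⟩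
  · by_contra huL
    exact (h.2 u ⟨hu, huL⟩).not_ge hle
  · rintro (rfl | huL)
    exacts [le_rfl, (h.1 u huL).le]

theorem eq_of_inner_eq (h : IsStrictCut E L v d) (hu : u ∈ E) (huv : ⟪u, d⟫ = ⟪v, d⟫) : u = v :=
  ((h.inner_le_iff hu).1 huv.le).resolve_right fun huL => (h.1 u huL).ne huv

theorem exists_mem_sphere (h : IsStrictCut E L v d) (hL : L.Nonempty) :
    ∃ d' ∈ Metric.sphere (0 : V) 1, IsStrictCut E L v d' := by
  obtain ⟨u, hu⟩ := hL
  have hd : d ≠ 0 := by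
    rintro rfl
    simpa using h.1 u hu
  have hpos : 0 < ‖d‖⁻¹ := inv_pos.2 (norm_pos_iff.2 hd)
  refine ⟨‖d‖⁻¹ • d, by simp [norm_smul, hd], fun u hu => ?_, fun u hu => ?_⟩ <;>
    simp only [real_inner_smul_right]
  exacts [mul_lt_mul_of_pos_left (h.1 u hu) hpos, mul_lt_mul_of_pos_left (h.2 u hu) hpos]

end IsStrictCut

theorem exists_forall_inner_sub_pos [CompleteSpace V] {F : Set V} (hF : F.Finite) {v : V}
    (hv : v ∉ convexHull ℝ F) : ∃ ℓ : V, ∀ w ∈ F, 0 < ⟪w - v, ℓ⟫ := by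
  obtain ⟨f, c, hfv, hfF⟩ := geometric_hahn_banach_point_closed (convex_convexHull ℝ F)
    (hF.isCompact_convexHull (𝕜 := ℝ)).isClosed hv
  refine ⟨(InnerProductSpace.toDual ℝ V).symm f, fun w hw => ?_⟩
  rw [real_inner_comm, InnerProductSpace.toDual_symm_apply, map_sub]
  linarith [hfF w (subset_convexHull ℝ F hw)]

theorem exists_mem_forall_inner_ne_zero {s F : Set V} (hs : IsOpen s) (hsne : s.Nonempty)
    (hF : F.Finite) (hF0 : (0 : V) ∉ F) : ∃ ℓ ∈ s, ∀ u ∈ F, ⟪u, ℓ⟫ ≠ 0 := by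
  have hdense : Dense (⋂₀ ((fun u => (innerSL ℝ u) ⁻¹' {0}ᶜ) '' F)) := by
    refine (hF.image _).dense_sInter (forall_mem_image.2 fun u _ => ?_)
      (forall_mem_image.2 fun u hu => ?_)
    · exact isOpen_compl_singleton.preimage (innerSL ℝ u).continuous
    · refine (dense_compl_singleton 0).preimage ((innerSL ℝ u).isOpenMap_of_ne_zero ?_)
      rw [← norm_ne_zero_iff, innerSL_apply_norm, norm_ne_zero_iff]
      exact ne_of_mem_of_not_mem hu hF0
  obtain ⟨ℓ, hℓ, hℓs⟩ := hdense.exists_mem_open hs hsne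
  exact ⟨ℓ, hℓs, fun u hu => by simpa using mem_sInter.1 hℓ _ (mem_image_of_mem _ hu)⟩

theorem eq_of_smul_sub_eq_smul_sub {E : Set V} (hE : ∀ x ∈ E, x ∉ convexHull ℝ (E \ {x}))
    {v w w' : V} (hv : v ∈ E) (hw : w ∈ E) (hw' : w' ∈ E) (hwv : w ≠ v) (hw'v : w' ≠ v)
    {a b : ℝ} (ha : 0 < a) (hb : 0 < b) (h : a • (w - v) = b • (w' - v)) : w = w' := by
  wlog hba : b ≤ a generalizing a b w w'
  · exact (this hw' hw hw'v hwv hb ha h.symm (le_of_not_ge hba)).symm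
  by_contra hne
  have hseg : w ∈ segment ℝ v w' := by
    rw [segment_eq_image']
    refine ⟨b / a, ⟨by positivity, (div_le_one ha).2 hba⟩, ?_⟩
    show v + (b / a) • (w' - v) = w
    rw [div_eq_inv_mul, mul_smul, ← h, smul_smul, inv_mul_cancel₀ ha.ne', one_smul,
      add_sub_cancel]
  exact hE w hw (segment_subset_convexHull (s := E \ {w}) ⟨hv, hwv.symm⟩ ⟨hw', Ne.symm hne⟩ hseg)

theorem exists_inner_sub_neg_and_pos {A B : Set V} (hA : A.Finite) {v d ℓ : V}
    (hAd : ∀ a ∈ A, ⟪a - v, d⟫ < 0) (hBd : ∀ b ∈ B, 0 ≤ ⟪b - v, d⟫)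
    (hBℓ : ∀ b ∈ B, 0 < ⟪b - v, ℓ⟫) :
    ∃ d' : V, (∀ a ∈ A, ⟪a - v, d'⟫ < 0) ∧ ∀ b ∈ B, 0 < ⟪b - v, d'⟫ := by
  have hsmall : ∀ᶠ ε in 𝓝[>] (0 : ℝ), 0 < ε ∧ ∀ a ∈ A, ⟪a - v, d + ε • ℓ⟫ < 0 := by
    refine eventually_mem_nhdsWithin.and (hA.eventually_all.2 fun a ha => ?_)
    simp only [inner_add_right, real_inner_smul_right]
    refine Tendsto.eventually_lt_const (hAd a ha) ?_
    have : Continuous fun ε : ℝ => ⟪a - v, d⟫ + ε * ⟪a - v, ℓ⟫ := by fun_prop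
    simpa using (this.tendsto 0).mono_left nhdsWithin_le_nhds
  obtain ⟨ε, hε, hA'⟩ := hsmall.exists
  refine ⟨d + ε • ℓ, hA', fun b hb => ?_⟩
  rw [inner_add_right, real_inner_smul_right]
  exact add_pos_of_nonneg_of_pos (hBd b hb) (mul_pos hε (hBℓ b hb))

theorem exists_mem_injOn_inner_div_inner {E B s : Set V}
    (hE : ∀ x ∈ E, x ∉ convexHull ℝ (E \ {x})) {v d : V} (hv : v ∈ E) (hB : B ⊆ E \ {v})
    (hBfin : B.Finite) (hBd : ∀ b ∈ B, 0 < ⟪b - v, d⟫) (hs : IsOpen s) (hsne : s.Nonempty)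
    (hsB : ∀ ℓ ∈ s, ∀ b ∈ B, 0 < ⟪b - v, ℓ⟫) :
    ∃ ℓ ∈ s, InjOn (fun b => ⟪b - v, d⟫ / ⟪b - v, ℓ⟫) B := by
  obtain ⟨ℓ, hℓs, hℓ⟩ := exists_mem_forall_inner_ne_zero hs hsne
    (F := image2 (fun b b' => ⟪b - v, d⟫ • (b' - v) - ⟪b' - v, d⟫ • (b - v)) B B \ {0})
    ((hBfin.image2 _ hBfin).sdiff) fun h => h.2 rfl
  -- Equal ratios make `b - v` and `b' - v` positively proportional, which `hE` rules out.
  refine ⟨ℓ, hℓs, fun b hb b' hb' hbb' => ?_⟩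
  have hcross : ⟪⟪b - v, d⟫ • (b' - v) - ⟪b' - v, d⟫ • (b - v), ℓ⟫ = 0 := by
    rw [div_eq_div_iff (hsB ℓ hℓs b hb).ne' (hsB ℓ hℓs b' hb').ne'] at hbb'
    rw [inner_sub_left, real_inner_smul_left, real_inner_smul_left]
    linarith
  have hpar : ⟪b - v, d⟫ • (b' - v) - ⟪b' - v, d⟫ • (b - v) = 0 := by
    by_contra hne
    exact hℓ _ ⟨mem_image2_of_mem hb hb', hne⟩ hcross
  exact eq_of_smul_sub_eq_smul_sub hE hv (hB hb).1 (hB hb').1 (hB hb).2 (hB hb').2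
    (hBd b' hb') (hBd b hb) (sub_eq_zero.1 hpar).symm

theorem exists_inner_sub_neg_insert_of_injOn {A B : Set V} (hB : B.Finite) (hBne : B.Nonempty)
    {v d ℓ : V} (hAd : ∀ a ∈ A, ⟪a - v, d⟫ < 0) (hBd : ∀ b ∈ B, 0 < ⟪b - v, d⟫)
    (hAℓ : ∀ a ∈ A, 0 < ⟪a - v, ℓ⟫) (hBℓ : ∀ b ∈ B, 0 < ⟪b - v, ℓ⟫)
    (hinj : InjOn (fun b => ⟪b - v, d⟫ / ⟪b - v, ℓ⟫) B) :
    ∃ z ∈ B, ∃ g : V, (∀ a ∈ insert z A, ⟪a - v, g⟫ < 0) ∧ ∀ b ∈ B, b ≠ z → 0 < ⟪b - v, g⟫ := by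
  -- Along `d - τ • ℓ`, the point `b` crosses the level of `v` at time `⟪b - v, d⟫ / ⟪b - v, ℓ⟫`;
  -- stop just after the first crossing.
  obtain ⟨z, hz, τ, hzτ, hτ⟩ := hB.exists_lt_forall_lt_of_injOn hBne hinj
  have hτ0 : 0 < τ := (div_pos (hBd z hz) (hBℓ z hz)).trans hzτ
  have hcross : ∀ b ∈ B, ⟪b - v, d - τ • ℓ⟫ = ⟪b - v, ℓ⟫ * (⟪b - v, d⟫ / ⟪b - v, ℓ⟫ - τ) := by
    intro b hb
    rw [inner_sub_right, real_inner_smul_right, mul_sub, mul_div_cancel₀ _ (hBℓ b hb).ne']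
    ring
  refine ⟨z, hz, d - τ • ℓ, ?_, fun b hb hbz => ?_⟩
  · rintro a (rfl | ha)
    · rw [hcross a hz]
      exact mul_neg_of_pos_of_neg (hBℓ a hz) (sub_neg.2 hzτ)
    · rw [inner_sub_right, real_inner_smul_right]
      nlinarith [hAd a ha, hAℓ a ha]
  · rw [hcross b hb]
    exact mul_pos (hBℓ b hb) (sub_pos.2 (hτ b hb hbz))

theorem exists_isStrictCut_insert [CompleteSpace V] {E A : Set V} (hE : E.Finite)
    (hconv : ∀ x ∈ E, x ∉ convexHull ℝ (E \ {x})) {v d : V} (hv : v ∈ E) (hA : A ⊆ E \ {v})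
    (hB : (E \ insert v A).Nonempty) (hAd : ∀ a ∈ A, ⟪a, d⟫ < ⟪v, d⟫)
    (hBd : ∀ b ∈ E \ insert v A, ⟪v, d⟫ ≤ ⟪b, d⟫) :
    ∃ z ∈ E \ insert v A, ∃ g : V, IsStrictCut E (insert z A) v g := by
  set B := E \ insert v A
  have hBv : B ⊆ E \ {v} := sdiff_subset_sdiff_right (singleton_subset_iff.2 (mem_insert v A))
  set C := {ℓ : V | ∀ w ∈ E \ {v}, 0 < ⟪w - v, ℓ⟫}
  have hC : IsOpen C := by
    have hCeq : C = ⋂ w ∈ E \ {v}, {ℓ | 0 < ⟪w - v, ℓ⟫} := by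
      ext
      simp [C]
    rw [hCeq]
    exact hE.sdiff.isOpen_biInter fun w _ => isOpen_lt continuous_const (by fun_prop)
  obtain ⟨ℓ₁, hℓ₁⟩ := exists_forall_inner_sub_pos hE.sdiff (hconv v hv)
  obtain ⟨d₁, hAd₁, hBd₁⟩ := exists_inner_sub_neg_and_pos (hE.subset (hA.trans sdiff_subset))
    (fun a ha => by rw [inner_sub_left, sub_neg]; exact hAd a ha)
    (fun b hb => by rw [inner_sub_left, sub_nonneg]; exact hBd b hb) fun b hb => hℓ₁ b (hBv hb)
  obtain ⟨ℓ, hℓC, hinj⟩ := exists_mem_injOn_inner_div_inner hconv hv hBv hE.sdiff hBd₁ hC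
    ⟨ℓ₁, hℓ₁⟩ fun ℓ hℓ b hb => hℓ b (hBv hb)
  obtain ⟨z, hz, g, hbelow, habove⟩ := exists_inner_sub_neg_insert_of_injOn hE.sdiff hB hAd₁ hBd₁
    (fun a ha => hℓC a (hA ha)) (fun b hb => hℓC b (hBv hb)) hinj
  refine ⟨z, hz, g, fun u hu => ?_, fun u ⟨huE, hu⟩ => ?_⟩
  · rw [← sub_neg, ← inner_sub_left]
    exact hbelow u hu
  · rw [← sub_pos, ← inner_sub_left]
    exact habove u ⟨huE, fun h => hu (insert_subset_insert (subset_insert z A) h)⟩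
      fun h => hu (mem_insert_of_mem v (h ▸ mem_insert z A))

end InnerProductSpace

section Enumeration

variable {N : ℕ}

theorem exists_isCompatEnum {F : Set (Euc N)} (hF : F.Finite) (d : Euc N) :
    ∃ y : ℕ → Euc N, IsCompatEnum F F.ncard d y := by
  classical
  set l := hF.toFinset.toList.mergeSort fun a b => decide (⟪a, d⟫ ≤ ⟪b, d⟫)
  have hperm : l.Perm hF.toFinset.toList := List.mergeSort_perm _ _
  have hlen : l.length = F.ncard := by
    rw [hperm.length_eq, Finset.length_toList, ncard_eq_toFinset_card F hF]
  have hsorted : l.Pairwise fun a b => ⟪a, d⟫ ≤ ⟪b, d⟫ := by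
    simpa using List.pairwise_mergeSort (le := fun a b : Euc N => decide (⟪a, d⟫ ≤ ⟪b, d⟫))
      (fun a b c hab hbc => by simp only [decide_eq_true_eq] at *; linarith)
      (fun a b => by simpa using le_total _ _) hF.toFinset.toList
  refine ⟨fun j => l.getD j 0, fun j hj k hk hjk => ?_, ?_, fun j k hjk hk => ?_⟩
  · simp only [mem_Iio, ← hlen] at hj hk
    simp only [List.getD_eq_getElem _ _ hj, List.getD_eq_getElem _ _ hk] at hjk
    exact (hperm.nodup_iff.2 hF.toFinset.nodup_toList).getElem_inj_iff.1 hjk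
  · ext u
    simp only [mem_image, mem_Iio, ← hlen]
    rw [← hF.mem_toFinset, ← Finset.mem_toList, ← hperm.mem_iff, List.mem_iff_getElem]
    constructor <;> rintro ⟨j, hj, rfl⟩
    exacts [⟨j, hj, (List.getD_eq_getElem _ _ hj).symm⟩, ⟨j, hj, List.getD_eq_getElem _ _ hj⟩]
  · rcases hjk.eq_or_lt with rfl | hjk
    · exact le_rfl
    rw [← hlen] at hk
    simp only [List.getD_eq_getElem _ _ hk, List.getD_eq_getElem _ _ (hjk.trans hk)]
    exact List.pairwise_iff_getElem.1 hsorted j k _ hk hjk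

namespace IsCompatEnum

variable {E : Set (Euc N)} {R : ℕ} {d : Euc N} {y : ℕ → Euc N}

theorem lt_ncard_iff (hy : IsCompatEnum E R d y) {I : Set ℝ} (hI : IsLowerSet I) {j : ℕ}
    (hj : j < R) : j < (E ∩ (⟪·, d⟫) ⁻¹' I).ncard ↔ ⟪y j, d⟫ ∈ I := by
  obtain ⟨hinj, himg, hmono⟩ := hy
  set T := Iio R ∩ y ⁻¹' ((⟪·, d⟫) ⁻¹' I)
  have hT : IsLowerSet T := fun k k' hk'k hk =>
    ⟨hk'k.trans_lt hk.1, hI (hmono k' k hk'k hk.1) hk.2⟩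
  obtain ⟨m, hm⟩ := hT.eq_univ_or_Iio.resolve_left fun h =>
    lt_irrefl R (h ▸ mem_univ R : R ∈ T).1
  have hcard : (E ∩ (⟪·, d⟫) ⁻¹' I).ncard = m := by
    rw [← himg, ← image_inter_preimage, (hinj.mono inter_subset_left).ncard_image]
    change T.ncard = m
    rw [hm, ncard_Iio_nat]
  rw [hcard, ← mem_Iio, ← hm]
  exact ⟨fun h => h.2, fun h => ⟨hj, h⟩⟩

theorem position_of_isStrictCut (hy : IsCompatEnum E R d y) {L : Set (Euc N)} {v : Euc N}
    (hcut : IsStrictCut E L v d) (hv : v ∈ E) (hL : L ⊆ E) (hvL : v ∉ L) (hLR : L.ncard < R) :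
    L ⊆ y '' Iio L.ncard ∧ y L.ncard = v ∧ (∀ j < L.ncard, ⟪y j, d⟫ < ⟪v, d⟫) ∧
      ∀ j, L.ncard < j → j < R → ⟪v, d⟫ < ⟪y j, d⟫ := by
  have hE : E.Finite := hy.2.1 ▸ (finite_Iio R).image y
  have hlt : ∀ j < R, j < L.ncard ↔ ⟪y j, d⟫ < ⟪v, d⟫ := fun j hj => by
    have hset : E ∩ (⟪·, d⟫) ⁻¹' Iio ⟪v, d⟫ = L := by
      ext u
      exact ⟨fun hu => (hcut.inner_lt_iff hu.1).1 hu.2, fun hu => ⟨hL hu, hcut.1 u hu⟩⟩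
    rw [← hset, hy.lt_ncard_iff (isLowerSet_Iio _) hj, mem_Iio]
  have hle : ∀ j < R, j < L.ncard + 1 ↔ ⟪y j, d⟫ ≤ ⟪v, d⟫ := fun j hj => by
    have hset : E ∩ (⟪·, d⟫) ⁻¹' Iic ⟪v, d⟫ = insert v L := by
      ext u
      refine ⟨fun hu => (hcut.inner_le_iff hu.1).1 hu.2, fun hu => ?_⟩
      have huE := insert_subset hv hL hu
      exact ⟨huE, (hcut.inner_le_iff huE).2 hu⟩
    rw [← ncard_insert_of_notMem hvL (hE.subset hL), ← hset, hy.lt_ncard_iff (isLowerSet_Iic _) hj,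
      mem_Iic]
  refine ⟨fun u hu => ?_, ?_, fun j hj => (hlt j (hj.trans hLR)).1 hj,
    fun j hj hjR => not_le.1 fun h => (by omega : ¬ j < L.ncard + 1) ((hle j hjR).2 h)⟩
  · obtain ⟨j, hj, rfl⟩ := hy.2.1.symm ▸ hL hu
    exact ⟨j, (hlt j hj).2 (hcut.1 _ hu), rfl⟩
  · refine hcut.eq_of_inner_eq (hy.2.1 ▸ mem_image_of_mem y hLR) (le_antisymm ?_ ?_)
    exacts [(hle _ hLR).1 (lt_add_one _), not_lt.1 fun h => lt_irrefl _ ((hlt _ hLR).2 h)]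

theorem exists_isStrictCut_succ (hy : IsCompatEnum E R d y) (hE : E.Finite)
    (hconv : ∀ u ∈ E, u ∉ convexHull ℝ (E \ {u})) {i : ℕ} (hi : i + 1 < R)
    (hleft : ∀ j < i, ⟪y j, d⟫ < ⟪y i, d⟫) :
    ∃ L ⊆ E, ∃ g : Euc N,
      y '' Iio i ⊆ L ∧ y i ∉ L ∧ L.ncard = i + 1 ∧ IsStrictCut E L (y i) g := by
  obtain ⟨hinj, himg, hmono⟩ := hy
  set A := y '' Iio i
  have hyE : ∀ j < R, y j ∈ E := fun j hj => himg ▸ mem_image_of_mem y hj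
  have hA : A ⊆ E \ {y i} := by
    rintro _ ⟨j, hj, rfl⟩
    exact ⟨hyE j (by simp at hj; omega), fun h => (hleft j hj).ne (congrArg (⟪·, d⟫) h)⟩
  have hB : ∀ b ∈ E \ insert (y i) A, ⟪y i, d⟫ ≤ ⟪b, d⟫ := by
    rintro b ⟨hb, hbA⟩
    obtain ⟨j, hj, rfl⟩ := himg ▸ hb
    exact hmono i j (not_lt.1 fun hji => hbA (mem_insert_of_mem _ (mem_image_of_mem y hji))) hj
  have hBne : y (i + 1) ∈ E \ insert (y i) A := by
    refine ⟨hyE _ hi, ?_⟩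
    rw [← image_insert_eq, hinj.mem_image_iff (insert_subset (by simp; omega)
      (Iio_subset_Iio (by omega))) hi]
    simp
  obtain ⟨z, hz, g, hcut⟩ := exists_isStrictCut_insert hE hconv (hyE i (by omega)) hA
    ⟨_, hBne⟩ (forall_mem_image.2 hleft) hB
  refine ⟨insert z A, insert_subset hz.1 (hA.trans sdiff_subset), g, subset_insert z A, ?_, ?_,
    hcut⟩
  · rintro (h | h)
    exacts [hz.2 (h ▸ mem_insert _ _), (hA h).2 rfl]
  · rw [ncard_insert_of_notMem (fun h => hz.2 (mem_insert_of_mem _ h)),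
      (hinj.mono (Iio_subset_Iio (by omega))).ncard_image, ncard_Iio_nat]

end IsCompatEnum

end Enumeration

/-- Indices are 0-based: position `i` here is position `i + 1` of the paper. -/
theorem strict_location_next_position_general {N : ℕ}
    (E : Set (Euc N)) (hEfin : E.Finite) (R : ℕ) (hR : R = E.ncard)
    (H1 : ∀ x ∈ E, x ∉ convexHull ℝ (E \ {x}))
    (d : Euc N) (x : ℕ → Euc N) (hx : IsCompatEnum E R d x)
    (i : ℕ) (hi : i + 1 < R)
    (hleft : ∀ j < i, ⟪x j, d⟫ < ⟪x i, d⟫) :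
    ∃ d' ∈ sph N, ∃ y : ℕ → Euc N, IsCompatEnum E R d' y ∧
      x '' (Set.Iio i) ⊆ y '' (Set.Iic i) ∧
      y (i + 1) = x i ∧
      (∀ j ≤ i, ⟪y j, d'⟫ < ⟪y (i + 1), d'⟫) ∧
      (∀ j : ℕ, i + 1 < j → j < R → ⟪y (i + 1), d'⟫ < ⟪y j, d'⟫) := by
  obtain ⟨L, hLE, g, hxL, hvL, hLcard, hcut⟩ := hx.exists_isStrictCut_succ hEfin H1 hi hleft
  obtain ⟨d', hd', hcut'⟩ := hcut.exists_mem_sphere (nonempty_of_ncard_ne_zero (by omega))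
  obtain ⟨y, hy⟩ := exists_isCompatEnum hEfin d'
  rw [← hR] at hy
  obtain ⟨hLy, hyv, hbelow, habove⟩ :=
    hy.position_of_isStrictCut hcut' (hx.2.1 ▸ mem_image_of_mem x (by omega : i < R)) hLE hvL
      (by omega)
  rw [hLcard, Iio_add_one_eq_Iic] at hLy
  rw [hLcard] at hyv hbelow habove
  refine ⟨d', hd', y, hy, hxL.trans hLy, hyv, fun j hj => ?_, fun j hj hjR => ?_⟩
  · rw [hyv]
    exact hbelow j (by omega)
  · rw [hyv]
    exact habove j hj hjR

/-- Strict location in the very next position. Indices are 0-based: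
position `i` here corresponds to position `i+1` of the paper. -/
theorem strict_location_next_position {N : ℕ} (hN : 2 ≤ N)
    (E : Set (Euc N)) (hEfin : E.Finite) (R : ℕ) (hR : R = E.ncard)
    (H1 : ∀ x ∈ E, x ∉ convexHull ℝ (E \ {x}))
    (d : Euc N) (hd : d ∈ sph N) (x : ℕ → Euc N) (hx : IsCompatEnum E R d x)
    (i : ℕ) (hi : i + 1 < R)
    (hleft : ∀ j < i, ⟪x j, d⟫ < ⟪x i, d⟫) :
    ∃ d' ∈ sph N, ∃ y : ℕ → Euc N, IsCompatEnum E R d' y ∧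
      x '' (Set.Iio i) ⊆ y '' (Set.Iic i) ∧
      y (i + 1) = x i ∧
      (∀ j ≤ i, ⟪y j, d'⟫ < ⟪y (i + 1), d'⟫) ∧
      (∀ j : ℕ, i + 1 < j → j < R → ⟪y (i + 1), d'⟫ < ⟪y j, d'⟫) :=
  strict_location_next_position_general E hEfin R hR H1 d x hx i hi hleft
end
end

section
/- (Reordering lemma.) Let E ⊆ ℝ^N (N ≥ 2) be a finite set of R points satisfying (H1). Let {x_j}_{j=1}^R be a d-compatible enumeration of E for some d ∈ S, and assume ⟨x_i,d⟩ < ⟨x_p,d⟩ for some indices 1 ≤ i < p ≤ R. Then there exist a direction d′ ∈ S and a d′-compatible enumeration {y_j}_{j=1}^R of E with {x_1,…,x_{i−1}} ⊆ {y_1,…,y_{p−1}}, y_p = x_i, and ⟨y_{p−1},d′⟩ < ⟨y_p,d′⟩ < ⟨y_{p+1},d′⟩ (i.e. d′ strictly locates x_i at the p-position). -/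
/-!
Write `x = x_i`. By (H1) some direction `e` exposes `x`, i.e. `⟪z - x, e⟫ < 0` for all other
`z ∈ E`. Along the directions `d + t • e`, `t > 0`, the points not above `x` for `d` lie strictly
below it, while a point `z` above `x` drops below it exactly after the time
`⟪z - x, d⟫ / -⟪z - x, e⟫`. Two such times coincide for all `e` near a given one only if
`z - x` and `w - x` lie on a common ray, i.e. one of `z`, `w` lies on the segment from `x` to the
other, which (H1) forbids. So for a generic `e` the points overtake `x` one at a time, and some
`t` puts exactly `p` points below `x` and none level with it; sorting `E` along `d + t • e` places
`x` strictly at position `p`, after `x_1, …, x_{i-1}`.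
-/

open scoped RealInnerProductSpace
open Set

noncomputable section

open scoped Finset

open Topology in
theorem exists_gt_forall_notMem_Ioc {α : Type*} (F : Finset α) (s : α → ℝ) (u : ℝ) :
    ∃ t > u, ∀ z ∈ F, s z ∉ Set.Ioc u t := by
  have hev : ∀ᶠ t in 𝓝[>] u, ∀ z ∈ F, s z ∉ Set.Ioc u t := by
    refine (Filter.eventually_all_finset F).2 fun z _ => ?_
    by_cases hz : u < s z
    · filter_upwards [nhdsWithin_le_nhds (Iio_mem_nhds hz)] with t ht hzt
      exact (lt_irrefl _) (ht.trans_le hzt.2)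
    · exact Filter.Eventually.of_forall fun t hzt => hz hzt.1
  obtain ⟨t, ht, hut⟩ := (hev.and self_mem_nhdsWithin).exists
  exact ⟨t, hut, ht⟩

/-- Discrete intermediate value theorem: `#{z ∈ F | s z < t}` grows by one at each positive
value of `s`. -/
theorem exists_pos_card_filter_lt_eq {α : Type*} (F : Finset α) (s : α → ℝ)
    (hs : Set.InjOn s {z | z ∈ F ∧ 0 < s z}) {k : ℕ} (hk₀ : #{z ∈ F | s z ≤ 0} ≤ k)
    (hk : k ≤ #F) : ∃ t > 0, (∀ z ∈ F, s z ≠ t) ∧ #{z ∈ F | s z < t} = k := by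
  classical
  induction k, hk₀ using Nat.le_induction with
  | base =>
    obtain ⟨t, ht, hgap⟩ := exists_gt_forall_notMem_Ioc F s 0
    refine ⟨t, ht, fun z hz hzt => hgap z hz ⟨hzt ▸ ht, hzt.le⟩, congrArg Finset.card ?_⟩
    refine Finset.filter_congr fun z hz => ⟨fun hzt => not_lt.1 fun h0 => hgap z hz ⟨h0, hzt.le⟩,
      fun h0 => h0.trans_lt ht⟩
  | succ k hk₀ ih =>
    obtain ⟨t, ht, hne, hcard⟩ := ih (by omega)
    have hsplit := Finset.card_filter_add_card_filter_not (s := F) (fun z => s z < t)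
    obtain ⟨z₀, hz₀, hmin⟩ := Finset.exists_min_image {z ∈ F | t < s z} s <| by
      refine Finset.card_pos.1 (lt_of_lt_of_le (by omega : 0 < #F - k) ?_)
      rw [← hsplit, hcard, Nat.add_sub_cancel_left]
      exact Finset.card_le_card fun z hz => by
        simp only [Finset.mem_filter, not_lt] at hz ⊢
        exact ⟨hz.1, lt_of_le_of_ne hz.2 (hne z hz.1).symm⟩
    simp only [Finset.mem_filter] at hz₀ hmin
    obtain ⟨t', ht', hgap⟩ := exists_gt_forall_notMem_Ioc F s (s z₀)
    refine ⟨t', by linarith, fun z hz hzt => hgap z hz ⟨hzt ▸ ht', hzt.le⟩, ?_⟩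
    have : {z ∈ F | s z < t'} = insert z₀ {z ∈ F | s z < t} := by
      ext z
      simp only [Finset.mem_insert, Finset.mem_filter]
      constructor
      · rintro ⟨hz, hzt'⟩
        refine or_iff_not_imp_right.2 fun hzt => ?_
        have hz₀z : s z₀ ≤ s z :=
          hmin z ⟨hz, lt_of_le_of_ne (not_lt.1 fun h => hzt ⟨hz, h⟩) (hne z hz).symm⟩
        have hzz₀ : s z ≤ s z₀ := not_lt.1 fun h => hgap z hz ⟨h, hzt'.le⟩
        exact (hs ⟨hz₀.1, by linarith⟩ ⟨hz, by linarith⟩ (le_antisymm hz₀z hzz₀)).symm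
      · rintro (rfl | ⟨hz, hzt⟩)
        · exact ⟨hz₀.1, ht'⟩
        · exact ⟨hz, by linarith⟩
    rw [this, Finset.card_insert_of_notMem (by simp [hz₀.2.le]), hcard]

theorem not_sameRay_sub_sub {M : Type*} [AddCommGroup M] [Module ℝ M] {S : Set M}
    (hS : ∀ x ∈ S, x ∉ convexHull ℝ (S \ {x})) {x y z : M} (hx : x ∈ S) (hy : y ∈ S) (hz : z ∈ S)
    (hxy : x ≠ y) (hxz : x ≠ z) (hyz : y ≠ z) : ¬ SameRay ℝ (y - x) (z - x) := by
  have hnotbtw : ∀ u v, u ∈ S → v ∈ S → u ≠ v → x ≠ v → ¬ Wbtw ℝ x v u :=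
    fun u v hu hv huv hxv hbtw =>
    hS v hv <| (convex_convexHull ℝ _).segment_subset (subset_convexHull ℝ (S \ {v}) ⟨hx, hxv⟩)
      (subset_convexHull ℝ (S \ {v}) ⟨hu, huv⟩) (mem_segment_iff_wbtw.2 hbtw)
  intro hray
  rcases wbtw_total_of_sameRay_vsub_left (x := x) hray with h | h
  exacts [hnotbtw z y hz hy hyz.symm hxy h, hnotbtw y z hy hz hyz hxz h]

section InnerProductSpace

variable {V : Type*} [NormedAddCommGroup V] [InnerProductSpace ℝ V]

theorem exists_forall_inner_sub_neg_of_notMem_convexHull [CompleteSpace V] {S : Set V}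
    (hS : S.Finite) {x : V} (hx : x ∉ convexHull ℝ S) : ∃ e : V, ∀ z ∈ S, ⟪z - x, e⟫ < 0 := by
  obtain ⟨f, u, hfS, hfx⟩ := geometric_hahn_banach_closed_point (convex_convexHull ℝ S)
    (hS.isCompact_convexHull (𝕜 := ℝ)).isClosed hx
  refine ⟨(InnerProductSpace.toDual ℝ V).symm f, fun z hz => ?_⟩
  have := hfS z (subset_convexHull ℝ S hz)
  rw [inner_sub_left, real_inner_comm, InnerProductSpace.toDual_symm_apply, real_inner_comm,
    InnerProductSpace.toDual_symm_apply]
  linarith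

theorem dense_setOf_inner_ne_zero {v : V} (hv : v ≠ 0) : Dense {e : V | ⟪v, e⟫ ≠ 0} := by
  have hint : interior ((ℝ ∙ v)ᗮ : Set V) = ∅ := by
    refine Set.not_nonempty_iff_eq_empty.1 fun hne => hv ?_
    have := (ℝ ∙ v)ᗮ.eq_top_of_nonempty_interior' hne
    rwa [Submodule.orthogonal_eq_top_iff, Submodule.span_singleton_eq_bot] at this
  convert interior_eq_empty_iff_dense_compl.1 hint using 1
  ext e
  simp [Submodule.mem_orthogonal_singleton_iff_inner_right]

theorem exists_mem_forall_inner_ne_zero_s8 [CompleteSpace V] {U : Set V} (hU : IsOpen U)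
    (hU' : U.Nonempty) (W : Finset V) (hW : (0 : V) ∉ W) : ∃ e ∈ U, ∀ v ∈ W, ⟪v, e⟫ ≠ 0 := by
  have hdense : Dense (⋂ v ∈ (W : Set V), {e : V | ⟪v, e⟫ ≠ 0}) :=
    dense_biInter_of_isOpen (fun v _ => isOpen_ne_fun (continuous_const.inner continuous_id)
      continuous_const) W.countable_toSet fun v hv =>
      dense_setOf_inner_ne_zero (ne_of_mem_of_not_mem hv hW)
  obtain ⟨e, heU, he⟩ := hdense.inter_open_nonempty U hU hU'
  exact ⟨e, heU, fun v hv => Set.mem_iInter₂.1 he v hv⟩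

theorem exists_forall_inner_sub_neg_injOn_div [CompleteSpace V] [DecidableEq V] {S : Finset V}
    (hS : ∀ x ∈ (S : Set V), x ∉ convexHull ℝ ((S : Set V) \ {x})) {x : V} (hx : x ∈ S)
    (a : V → ℝ) : ∃ e : V, (∀ z ∈ S.erase x, ⟪z - x, e⟫ < 0) ∧
      Set.InjOn (fun z => a z / -⟪z - x, e⟫) {z | z ∈ S.erase x ∧ 0 < a z} := by
  obtain ⟨e₀, he₀⟩ := exists_forall_inner_sub_neg_of_notMem_convexHull
    ((S : Set V) \ {x}).toFinite (hS x hx)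
  set U := ⋂ z ∈ S.erase x, {e : V | ⟪z - x, e⟫ < 0}
  have hU : IsOpen U := isOpen_biInter_finset fun z _ =>
    isOpen_lt (continuous_const.inner continuous_id) continuous_const
  have he₀U : e₀ ∈ U := Set.mem_iInter₂.2 fun z hz => he₀ z <| by
    simpa [and_comm] using hz
  set W := {q ∈ S.erase x ×ˢ S.erase x | q.1 ≠ q.2 ∧ 0 < a q.1 ∧ 0 < a q.2}.image
    fun q => a q.1 • (q.2 - x) - a q.2 • (q.1 - x)
  have hW : (0 : V) ∉ W := by
    simp only [W, Finset.mem_image, Finset.mem_filter, Finset.mem_product, Finset.mem_erase,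
      not_exists, not_and]
    rintro ⟨z, w⟩ ⟨⟨⟨hzx, hz⟩, hwx, hw⟩, hzw, haz, haw⟩ h0
    refine not_sameRay_sub_sub hS hx hw hz hwx.symm hzx.symm (Ne.symm hzw)
      (Or.inr (Or.inr ⟨a z, a w, haz, haw, sub_eq_zero.1 h0⟩))
  obtain ⟨e, heU, heW⟩ := exists_mem_forall_inner_ne_zero_s8 hU ⟨e₀, he₀U⟩ W hW
  have hneg : ∀ z ∈ S.erase x, ⟪z - x, e⟫ < 0 := fun z hz => Set.mem_iInter₂.1 heU z hz
  refine ⟨e, hneg, fun z hz w hw hzw => by_contra fun hne => heW (a z • (w - x) - a w • (z - x))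
    (Finset.mem_image_of_mem _ (a := (z, w)) (Finset.mem_filter.2
      ⟨Finset.mem_product.2 ⟨hz.1, hw.1⟩, hne, hz.2, hw.2⟩)) ?_⟩
  have hbz := hneg z hz.1
  have hbw := hneg w hw.1
  rw [div_eq_div_iff (by linarith) (by linarith)] at hzw
  rw [inner_sub_left, real_inner_smul_left, real_inner_smul_left]
  linarith

theorem exists_card_filter_inner_lt_eq [CompleteSpace V] [DecidableEq V] {S : Finset V}
    (hS : ∀ x ∈ (S : Set V), x ∉ convexHull ℝ ((S : Set V) \ {x})) {x : V} (hx : x ∈ S) (d : V)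
    {k : ℕ} (hk₀ : #{z ∈ S.erase x | ⟪z, d⟫ ≤ ⟪x, d⟫} ≤ k) (hk : k < #S) :
    ∃ w : V, (∀ z ∈ S.erase x, ⟪z, d⟫ ≤ ⟪x, d⟫ → ⟪z, w⟫ < ⟪x, w⟫) ∧
      (∀ z ∈ S.erase x, ⟪z, w⟫ ≠ ⟪x, w⟫) ∧ #{z ∈ S | ⟪z, w⟫ < ⟪x, w⟫} = k := by
  obtain ⟨e, hneg, hinj⟩ := exists_forall_inner_sub_neg_injOn_div hS hx fun z => ⟪z - x, d⟫
  set s := fun z => ⟪z - x, d⟫ / -⟪z - x, e⟫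
  have hs_nonpos : ∀ z ∈ S.erase x, s z ≤ 0 ↔ ⟪z, d⟫ ≤ ⟪x, d⟫ := fun z hz => by
    rw [← not_lt, div_pos_iff_of_pos_right (neg_pos.2 (hneg z hz)), not_lt, inner_sub_left,
      sub_nonpos]
  have hinj' : Set.InjOn s {z | z ∈ S.erase x ∧ 0 < s z} := hinj.mono fun z hz =>
    Set.mem_ofPred.2 ⟨hz.1, (div_pos_iff_of_pos_right (neg_pos.2 (hneg z hz.1))).1 hz.2⟩
  obtain ⟨t, ht, hst, hcard⟩ := exists_pos_card_filter_lt_eq (S.erase x) s hinj'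
    (k := k) (by rwa [Finset.filter_congr hs_nonpos]) (by rw [Finset.card_erase_of_mem hx]; omega)
  have hcross : ∀ z ∈ S.erase x,
      ⟪z, d + t • e⟫ - ⟪x, d + t • e⟫ = -⟪z - x, e⟫ * (s z - t) := fun z hz => by
    simp only [s, mul_sub, mul_div_cancel₀ _ (neg_ne_zero.2 (hneg z hz).ne)]
    simp only [inner_sub_left, inner_add_right, real_inner_smul_right]
    ring
  have hlt : ∀ z ∈ S.erase x, ⟪z, d + t • e⟫ < ⟪x, d + t • e⟫ ↔ s z < t := fun z hz => by
    rw [← sub_neg, hcross z hz, ← mul_zero (-⟪z - x, e⟫),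
      mul_lt_mul_iff_right₀ (neg_pos.2 (hneg z hz)), sub_neg]
  refine ⟨d + t • e, fun z hz hzd => (hlt z hz).2 (((hs_nonpos z hz).2 hzd).trans_lt ht),
    fun z hz h => hst z hz ?_, ?_⟩
  · rw [← sub_eq_zero, hcross z hz] at h
    exact sub_eq_zero.1 ((mul_eq_zero.1 h).resolve_left (neg_ne_zero.2 (hneg z hz).ne))
  · rw [← hcard, ← Finset.filter_congr hlt, Finset.filter_erase,
      Finset.erase_eq_of_notMem (by simp)]

end InnerProductSpace

theorem exists_mem_sph_inner_lt_iff {N : ℕ} {w : Euc N} (hw : w ≠ 0) :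
    ∃ d ∈ sph N, ∀ z z' : Euc N, ⟪z, d⟫ < ⟪z', d⟫ ↔ ⟪z, w⟫ < ⟪z', w⟫ := by
  refine ⟨‖w‖⁻¹ • w, by simpa [sph] using norm_smul_inv_norm (𝕜 := ℝ) hw, fun z z' => ?_⟩
  rw [real_inner_smul_right, real_inner_smul_right,
    mul_lt_mul_iff_right₀ (inv_pos.2 (norm_pos_iff.2 hw))]

namespace IsCompatEnum

variable {N : ℕ} {E : Set (Euc N)} {R : ℕ} {d : Euc N} {y : ℕ → Euc N}

theorem mem (hy : IsCompatEnum E R d y) {j : ℕ} (hj : j < R) : y j ∈ E :=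
  hy.2.1 ▸ Set.mem_image_of_mem y hj

theorem mem_image_Iio_of_inner_lt (hy : IsCompatEnum E R d y) {z : Euc N} (hz : z ∈ E) {q : ℕ}
    (h : ⟪z, d⟫ < ⟪y q, d⟫) : z ∈ y '' Set.Iio q := by
  obtain ⟨j, hj, rfl⟩ : z ∈ y '' Set.Iio R := hy.2.1 ▸ hz
  exact ⟨j, lt_of_not_ge fun hqj => (hy.2.2 q j hqj hj).not_gt h, rfl⟩

theorem inner_lt_of_lt (hy : IsCompatEnum E R d y) {j q : ℕ}
    (huniq : ∀ z ∈ E, z ≠ y q → ⟪z, d⟫ ≠ ⟪y q, d⟫) (hjq : j < q) (hq : q < R) :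
    ⟪y j, d⟫ < ⟪y q, d⟫ :=
  (hy.2.2 j q hjq.le hq).lt_of_ne <|
    huniq _ (hy.mem (hjq.trans hq)) (hy.1.ne (hjq.trans hq) hq hjq.ne)

theorem inner_lt_of_gt (hy : IsCompatEnum E R d y) {j q : ℕ}
    (huniq : ∀ z ∈ E, z ≠ y q → ⟪z, d⟫ ≠ ⟪y q, d⟫) (hqj : q < j) (hj : j < R) :
    ⟪y q, d⟫ < ⟪y j, d⟫ :=
  (hy.2.2 q j hqj.le hj).lt_of_ne <|
    (huniq _ (hy.mem hj) (hy.1.ne hj (hqj.trans hj) hqj.ne')).symm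

theorem card_filter_inner_le_le {S : Finset (Euc N)} (hy : IsCompatEnum S #S d y) {q : ℕ}
    {c : ℝ} (hc : c < ⟪y q, d⟫) : #{z ∈ S | ⟪z, d⟫ ≤ c} ≤ q := by
  refine (Finset.card_le_card (t := (Finset.range q).image y) fun z hz => ?_).trans
    (Finset.card_image_le.trans_eq (Finset.card_range q))
  obtain ⟨hz, hzc⟩ := Finset.mem_filter.1 hz
  obtain ⟨j, hj, rfl⟩ := hy.mem_image_Iio_of_inner_lt hz (hzc.trans_lt hc)
  exact Finset.mem_image_of_mem y (Finset.mem_range.2 hj)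

end IsCompatEnum

theorem exists_isCompatEnum_s8 {N : ℕ} (S : Finset (Euc N)) (d : Euc N) :
    ∃ y, IsCompatEnum S #S d y := by
  set g : Fin #S ≃ S := S.equivFin.symm
  set σ := Tuple.sort fun j => ⟪(g j : Euc N), d⟫
  refine ⟨fun n => if h : n < #S then g (σ ⟨n, h⟩) else 0, ?_, ?_, ?_⟩
  · intro n hn m hm h
    simp only [Set.mem_Iio] at hn hm
    simp only [dif_pos hn, dif_pos hm] at h
    simpa using σ.injective (g.injective (Subtype.ext h))
  · ext z
    constructor
    · rintro ⟨n, hn, rfl⟩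
      simp only [Set.mem_Iio] at hn
      simp only [dif_pos hn, Finset.mem_coe, Finset.coe_mem]
    · intro hz
      set j := σ.symm (g.symm ⟨z, hz⟩)
      exact ⟨j, j.2, by simp [j]⟩
  · intro a b hab hb
    simp only [dif_pos hb, dif_pos (hab.trans_lt hb)]
    exact Tuple.monotone_sort (fun j => ⟪(g j : Euc N), d⟫) (Fin.mk_le_mk.2 hab)

theorem exists_isCompatEnum_apply_card_eq {N : ℕ} (S : Finset (Euc N)) (d : Euc N) {x : Euc N}
    (hx : x ∈ S) (huniq : ∀ z ∈ (S : Set (Euc N)), z ≠ x → ⟪z, d⟫ ≠ ⟪x, d⟫) :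
    ∃ y, IsCompatEnum S #S d y ∧ y #{z ∈ S | ⟪z, d⟫ < ⟪x, d⟫} = x := by
  obtain ⟨y, hy⟩ := exists_isCompatEnum_s8 S d
  obtain ⟨q, hq, rfl⟩ : x ∈ y '' Set.Iio #S := hy.2.1 ▸ hx
  refine ⟨y, hy, congrArg y ?_⟩
  have : {z ∈ S | ⟪z, d⟫ < ⟪y q, d⟫} = (Finset.range q).image y := by
    ext z
    simp only [Finset.mem_filter, Finset.mem_image, Finset.mem_range]
    constructor
    · rintro ⟨hz, hzq⟩
      exact hy.mem_image_Iio_of_inner_lt hz hzq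
    · rintro ⟨j, hjq, rfl⟩
      exact ⟨hy.mem (hjq.trans hq), hy.inner_lt_of_lt huniq hjq hq⟩
  rw [this, Finset.card_image_of_injOn (hy.1.mono fun j hj => (Finset.mem_range.1 hj).trans hq),
    Finset.card_range]

/-- Indices are 0-based: positions `i < p` here correspond to positions `i+1 < p+1` of the
paper. -/
theorem reordering_lemma_general {N : ℕ}
    (E : Set (Euc N)) (hEfin : E.Finite) (R : ℕ) (hR : R = E.ncard)
    (H1 : ∀ x ∈ E, x ∉ convexHull ℝ (E \ {x}))
    (d : Euc N) (x : ℕ → Euc N) (hx : IsCompatEnum E R d x)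
    (i p : ℕ) (hip : i < p) (hp : p < R)
    (h : ⟪x i, d⟫ < ⟪x p, d⟫) :
    ∃ d' ∈ sph N, ∃ y : ℕ → Euc N, IsCompatEnum E R d' y ∧
      x '' (Set.Iio i) ⊆ y '' (Set.Iio p) ∧
      y p = x i ∧
      (∀ j < p, ⟪y j, d'⟫ < ⟪y p, d'⟫) ∧
      (∀ j : ℕ, p < j → j < R → ⟪y p, d'⟫ < ⟪y j, d'⟫) := by
  classical
  obtain ⟨S, rfl⟩ := hEfin.exists_finset_coe
  rw [Set.ncard_coe_finset] at hR
  subst hR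
  have hiS : x i ∈ S := hx.mem (hip.trans hp)
  have hbelow : #{z ∈ S.erase (x i) | ⟪z, d⟫ ≤ ⟪x i, d⟫} ≤ p :=
    (Finset.card_le_card (Finset.filter_subset_filter _ (S.erase_subset _))).trans
      (hx.card_filter_inner_le_le h)
  obtain ⟨w, hw_lt, hw_ne, hw_card⟩ := exists_card_filter_inner_lt_eq H1 hiS d hbelow hp
  obtain ⟨d', hd', hd'w⟩ := exists_mem_sph_inner_lt_iff (w := w) fun hw => hw_ne (x p)
    (Finset.mem_erase.2 ⟨hx.1.ne hp (hip.trans hp) hip.ne', hx.mem hp⟩) (by simp [hw])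
  have huniq : ∀ z ∈ (S : Set (Euc N)), z ≠ x i → ⟪z, d'⟫ ≠ ⟪x i, d'⟫ := fun z hz hzi => by
    rw [ne_iff_lt_or_gt, hd'w, hd'w, ← ne_iff_lt_or_gt]
    exact hw_ne z (Finset.mem_erase.2 ⟨hzi, hz⟩)
  obtain ⟨y, hy, hyp⟩ := exists_isCompatEnum_apply_card_eq S d' hiS huniq
  simp only [hd'w, hw_card] at hyp
  rw [← hyp] at huniq
  refine ⟨d', hd', y, hy, ?_, hyp, fun j hj => hy.inner_lt_of_lt huniq hj hp,
    fun j hpj hj => hy.inner_lt_of_gt huniq hpj hj⟩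
  rintro _ ⟨j, hj, rfl⟩
  have hjS : j < #S := hj.trans (hip.trans hp)
  refine hy.mem_image_Iio_of_inner_lt (hx.mem hjS) ?_
  rw [hyp, hd'w]
  exact hw_lt (x j) (Finset.mem_erase.2 ⟨hx.1.ne hjS (hip.trans hp) hj.ne, hx.mem hjS⟩)
    (hx.2.2 j i hj.le (hip.trans hp))

/-- Reordering lemma. Indices are 0-based: positions `i < p` here
correspond to positions `i+1 < p+1` of the paper. -/
theorem reordering_lemma {N : ℕ} (hN : 2 ≤ N)
    (E : Set (Euc N)) (hEfin : E.Finite) (R : ℕ) (hR : R = E.ncard)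
    (H1 : ∀ x ∈ E, x ∉ convexHull ℝ (E \ {x}))
    (d : Euc N) (hd : d ∈ sph N) (x : ℕ → Euc N) (hx : IsCompatEnum E R d x)
    (i p : ℕ) (hip : i < p) (hp : p < R)
    (h : ⟪x i, d⟫ < ⟪x p, d⟫) :
    ∃ d' ∈ sph N, ∃ y : ℕ → Euc N, IsCompatEnum E R d' y ∧
      x '' (Set.Iio i) ⊆ y '' (Set.Iio p) ∧
      y p = x i ∧
      (∀ j < p, ⟪y j, d'⟫ < ⟪y p, d'⟫) ∧
      (∀ j : ℕ, p < j → j < R → ⟪y p, d'⟫ < ⟪y j, d'⟫) :=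
  reordering_lemma_general E hEfin R hR H1 d x hx i p hip hp h
end
end

section
/- Let ℜ₀ be a finite family of polytopes in ℝ^N satisfying (H1) and (H2), and let x₁, x₂, …, x_k be distinct points of E with 1 ≤ k < r_min. Then the following are equivalent: (i) conv(E \ {x₁,…,x_k}) = Ω_{ℜ₀}(d_k) for some direction d_k ∈ S (i.e. conv(E \ {x₁,…,x_k}) ∈ ℜ₁ = F(ℜ₀)); (ii) there exist d_k ∈ S and a d_k-compatible enumeration {x′_i}_{i=1}^R of E such that ⟨x′_1,d_k⟩ ≤ … ≤ ⟨x′_k,d_k⟩ < ⟨x′_{k+1},d_k⟩ = ⋯ = ⟨x′_{r_min},d_k⟩ ≤ … ≤ ⟨x′_R,d_k⟩ and {x₁,…,x_k} = {x′_1,…,x′_k}. -/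
/-!
Under (H1) every `A ⊆ E` is the set of extreme points of `conv A`, so `conv A` determines `A`.
Under (H2), a point `x ∈ E` is a `d`-active extreme point of some member of `ℜ₀` exactly when at
least `r_min` points `w ∈ E` satisfy `⟪w, d⟫ ≤ ⟪x, d⟫`: one direction because that member
contains at least `r_min` points of `E`, all at or below `x`; the other by taking the hull of `x`
together with `r_min - 1` points below it. So, with `X = {x₁, …, x_k}`, (i) says that `E \ X` is
the set of these points, i.e. `X` lies strictly below `E \ X` in direction `d` and the lowest
points of `E \ X` already have `r_min` points of `E` at or below them. Listing `X` and then
`E \ X` in increasing order of `⟪·, d⟫` turns this into the enumeration of (ii), and conversely.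
-/

open scoped RealInnerProductSpace
open Set

noncomputable section

section SortedEnum

variable {V β : Type*} [LinearOrder β] {f : V → β} {E X : Set V} {R k r : ℕ}

def IsSortedEnum (E : Set V) (R : ℕ) (f : V → β) (x : ℕ → V) : Prop :=
  InjOn x (Iio R) ∧ x '' Iio R = E ∧ ∀ i j, i ≤ j → j < R → f (x i) ≤ f (x j)

def IsRankCut (E X : Set V) (f : V → β) (r : ℕ) : Prop :=
  (∀ p ∈ X, ∀ q ∈ E \ X, f p < f q) ∧ ∀ q ∈ E \ X, r ≤ {w ∈ E | f w ≤ f q}.ncard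

def highRank (E : Set V) (f : V → β) (r : ℕ) : Set V :=
  {x ∈ E | r ≤ {w ∈ E | f w ≤ f x}.ncard}

theorem sdiff_eq_highRank_iff_isRankCut (hE : E.Finite) (hXE : X ⊆ E) (hX : X.ncard < r) :
    E \ X = highRank E f r ↔ IsRankCut E X f r := by
  have hmono : ∀ {a b : V}, f a ≤ f b →
      {w ∈ E | f w ≤ f a}.ncard ≤ {w ∈ E | f w ≤ f b}.ncard := fun hab =>
    ncard_le_ncard (fun w hw => ⟨hw.1, hw.2.trans hab⟩) (hE.subset (sep_subset _ _))
  constructor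
  · intro h
    refine ⟨fun p hp q hq => lt_of_not_ge fun hqp => ?_, fun q hq => (h ▸ hq).2⟩
    have hp' : p ∈ highRank E f r := ⟨hXE hp, (h ▸ hq).2.trans (hmono hqp)⟩
    exact (h ▸ hp').2 hp
  · rintro ⟨hsep, hrank⟩
    ext x
    refine ⟨fun hx => ⟨hx.1, hrank x hx⟩, fun hx => ⟨hx.1, fun hxX => ?_⟩⟩
    have hsub : {w ∈ E | f w ≤ f x} ⊆ X := fun w hw =>
      by_contra fun hwX => (hsep x hxX w ⟨hw.1, hwX⟩).not_ge hw.2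
    exact (hx.2.trans (ncard_le_ncard hsub (hE.subset hXE))).not_gt hX

namespace IsSortedEnum

variable {x : ℕ → V} {c : β} {n j : ℕ}

theorem le_ncard_sublevel (hx : IsSortedEnum E R f x) (hn : n ≤ R) (h : ∀ j < n, f (x j) ≤ c) :
    n ≤ {w ∈ E | f w ≤ c}.ncard := by
  obtain ⟨hinj, himg, -⟩ := hx
  have hsub : x '' Iio n ⊆ {w ∈ E | f w ≤ c} := by
    rintro _ ⟨j, hj, rfl⟩
    exact ⟨himg ▸ mem_image_of_mem x (lt_of_lt_of_le hj hn), h j hj⟩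
  calc n = (x '' Iio n).ncard := by
        rw [(hinj.mono (Iio_subset_Iio hn)).ncard_image, ncard_Iio_nat]
    _ ≤ _ := ncard_le_ncard hsub ((himg ▸ (finite_Iio R).image x).subset (sep_subset _ _))

theorem ncard_sublevel_le (hx : IsSortedEnum E R f x) (hc : c < f (x j)) :
    {w ∈ E | f w ≤ c}.ncard ≤ j := by
  obtain ⟨-, himg, hmono⟩ := hx
  have hsub : {w ∈ E | f w ≤ c} ⊆ x '' Iio j := by
    rintro _ ⟨hw, hwc⟩
    rw [← himg] at hw
    obtain ⟨i, hi, rfl⟩ := hw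
    exact mem_image_of_mem x (lt_of_not_ge fun hji => (hwc.trans_lt hc).not_ge (hmono j i hji hi))
  calc _ ≤ (x '' Iio j).ncard := ncard_le_ncard hsub ((finite_Iio j).image x)
    _ ≤ j := (ncard_image_le (finite_Iio j)).trans (ncard_Iio_nat j).le

theorem isRankCut_image_Iio (hx : IsSortedEnum E R f x) (hr : r ≤ R)
    (hlt : ∀ j < k, f (x j) < f (x k)) (heq : ∀ j, k ≤ j → j < r → f (x j) = f (x k)) :
    IsRankCut E (x '' Iio k) f r := by
  have hupper : ∀ q ∈ E \ x '' Iio k, ∃ i, k ≤ i ∧ i < R ∧ x i = q := by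
    rintro q ⟨hq, hqk⟩
    rw [← hx.2.1] at hq
    obtain ⟨i, hi, rfl⟩ := hq
    exact ⟨i, le_of_not_gt fun hik => hqk ⟨i, hik, rfl⟩, hi, rfl⟩
  constructor
  · rintro _ ⟨j, hj, rfl⟩ q hq
    obtain ⟨i, hki, hi, rfl⟩ := hupper q hq
    exact (hlt j hj).trans_le (hx.2.2 k i hki hi)
  · intro q hq
    obtain ⟨i, hki, hi, rfl⟩ := hupper q hq
    refine hx.le_ncard_sublevel hr fun j hj => ?_
    rcases lt_or_ge j k with hjk | hkj
    · exact (hlt j hjk).le.trans (hx.2.2 k i hki hi)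
    · exact (heq j hkj hj).le.trans (hx.2.2 k i hki hi)

end IsSortedEnum

theorem Set.Finite.exists_nodup_pairwise (hE : E.Finite) (f : V → β) :
    ∃ l : List V, l.Nodup ∧ {a | a ∈ l} = E ∧ l.Pairwise (fun a b => f a ≤ f b) := by
  classical
  refine ⟨hE.toFinset.toList.mergeSort (fun a b => decide (f a ≤ f b)),
    (List.mergeSort_perm _ _).nodup_iff.2 (Finset.nodup_toList _), by ext; simp, ?_⟩
  simpa using List.pairwise_mergeSort (le := fun a b => decide (f a ≤ f b))
    (fun a b c hab hbc => by simp only [decide_eq_true_eq] at *; exact hab.trans hbc)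
    (fun a b => by simpa using le_total (f a) (f b)) _

theorem List.Nodup.ncard_setOf_mem {l : List V} (hl : l.Nodup) :
    {a | a ∈ l}.ncard = l.length := by
  classical
  rw [← List.coe_toFinset, ncard_coe_finset, List.toFinset_card_of_nodup hl]

theorem List.image_getD_Iio_length (l : List V) (e : V) :
    (fun i => l.getD i e) '' Iio l.length = {a | a ∈ l} := by
  ext a
  simp only [mem_image, mem_Iio, mem_ofPred_eq, List.mem_iff_getElem]
  constructor
  · rintro ⟨i, hi, rfl⟩
    exact ⟨i, hi, (List.getD_eq_getElem _ _ hi).symm⟩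
  · rintro ⟨i, hi, rfl⟩
    exact ⟨i, hi, List.getD_eq_getElem _ _ hi⟩

theorem List.isSortedEnum_getD {l : List V} (hnd : l.Nodup)
    (hl : l.Pairwise (fun a b => f a ≤ f b)) (e : V) :
    IsSortedEnum {a | a ∈ l} l.length f (fun i => l.getD i e) := by
  refine ⟨fun i hi j hj hij => ?_, l.image_getD_Iio_length e, fun i j hij hj => ?_⟩
  · rw [mem_Iio] at hi hj
    simp only [List.getD_eq_getElem _ _ hi, List.getD_eq_getElem _ _ hj] at hij
    exact hnd.getElem_inj_iff.1 hij
  · simp only [List.getD_eq_getElem _ _ (hij.trans_lt hj), List.getD_eq_getElem _ _ hj]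
    rcases hij.lt_or_eq with hlt | rfl
    · exact List.pairwise_iff_getElem.1 hl i j _ hj hlt
    · exact le_rfl

theorem IsRankCut.exists_isSortedEnum (hcut : IsRankCut E X f r) (hE : E.Finite)
    (hR : E.ncard = R) (hXE : X ⊆ E) (hXk : X.ncard = k) (hk : k < r) (hr : r ≤ R) :
    ∃ x, IsSortedEnum E R f x ∧ (∀ j < k, f (x j) < f (x k)) ∧
      (∀ j, k ≤ j → j < r → f (x j) = f (x k)) ∧ x '' Iio k = X := by
  obtain ⟨hsep, hrank⟩ := hcut
  obtain ⟨l₁, hnd₁, hmem₁, hl₁⟩ := (hE.subset hXE).exists_nodup_pairwise f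
  obtain ⟨l₂, hnd₂, hmem₂, hl₂⟩ := (hE.sdiff (t := X)).exists_nodup_pairwise f
  have hmem : {a | a ∈ l₁ ++ l₂} = E := by
    simp only [List.mem_append, ofPred_or, hmem₁, hmem₂, union_sdiff_cancel hXE]
  have hnd : (l₁ ++ l₂).Nodup := by
    refine List.nodup_append.2 ⟨hnd₁, hnd₂, fun a ha b hb hab => ?_⟩
    subst hab
    exact (hmem₂ ▸ hb : a ∈ E \ X).2 (hmem₁ ▸ ha)
  have hl : (l₁ ++ l₂).Pairwise (fun a b => f a ≤ f b) :=
    List.pairwise_append.2 ⟨hl₁, hl₂, fun a ha b hb => (hsep a (hmem₁ ▸ ha) b (hmem₂ ▸ hb)).le⟩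
  have hlen₁ : l₁.length = k := by rw [← hnd₁.ncard_setOf_mem, hmem₁, hXk]
  have hlen : (l₁ ++ l₂).length = R := by rw [← hnd.ncard_setOf_mem, hmem, hR]
  obtain ⟨e, -⟩ : E.Nonempty := nonempty_of_ncard_ne_zero (by omega)
  set x := fun i => (l₁ ++ l₂).getD i e
  have hx : IsSortedEnum E R f x := hmem ▸ hlen ▸ List.isSortedEnum_getD hnd hl e
  have hxk : x '' Iio k = X := by
    rw [← hlen₁, ← hmem₁, ← List.image_getD_Iio_length l₁ e]
    exact image_congr fun i hi => List.getD_append _ _ _ _ hi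
  have hkR : k < R := hk.trans_le hr
  have hkX : x k ∈ E \ X := by
    refine ⟨hx.2.1 ▸ mem_image_of_mem x hkR, ?_⟩
    rw [← hxk]
    rintro ⟨j, hj, hjk⟩
    exact (ne_of_lt hj) (hx.1 ((mem_Iio.1 hj).trans hkR) hkR hjk)
  refine ⟨x, hx, fun j hj => hsep _ (hxk ▸ mem_image_of_mem x hj) _ hkX,
    fun j hkj hjr => ?_, hxk⟩
  refine le_antisymm (le_of_not_gt fun hlt => ?_) (hx.2.2 k j hkj (hjr.trans_le hr))
  exact ((hrank _ hkX).trans (hx.ncard_sublevel_le hlt)).not_gt hjr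

theorem exists_isSortedEnum_iff_isRankCut (hE : E.Finite) (hR : E.ncard = R) (hXE : X ⊆ E)
    (hXk : X.ncard = k) (hk : k < r) (hr : r ≤ R) :
    (∃ x, IsSortedEnum E R f x ∧ (∀ j < k, f (x j) < f (x k)) ∧
      (∀ j, k ≤ j → j < r → f (x j) = f (x k)) ∧ x '' Iio k = X) ↔ IsRankCut E X f r := by
  refine ⟨?_, fun hcut => hcut.exists_isSortedEnum hE hR hXE hXk hk hr⟩
  rintro ⟨x, hx, hlt, heq, rfl⟩
  exact hx.isRankCut_image_Iio hr hlt heq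

end SortedEnum

section ConvexIndependent

variable {V : Type*} [AddCommGroup V] [Module ℝ V] [TopologicalSpace V] [T2Space V]
  [IsTopologicalAddGroup V] [ContinuousSMul ℝ V] [LocallyConvexSpace ℝ V] {A E : Set V}

theorem Set.Finite.extremePoints_convexHull_eq (hA : A.Finite)
    (hci : ConvexIndependent ℝ ((↑) : A → V)) : (convexHull ℝ A).extremePoints ℝ = A := by
  refine extremePoints_convexHull_subset.antisymm fun x hx => by_contra fun hxe => ?_
  -- Krein–Milman, the hull of the finitely many extreme points being closed
  have hKM : convexHull ℝ ((convexHull ℝ A).extremePoints ℝ) = convexHull ℝ A := by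
    have hfin := hA.subset (extremePoints_convexHull_subset (𝕜 := ℝ))
    simpa [(hfin.isCompact_convexHull ℝ).isClosed.closure_eq] using
      closure_convexHull_extremePoints (hA.isCompact_convexHull ℝ) (convex_convexHull ℝ A)
  have hxK : x ∈ convexHull ℝ ((convexHull ℝ A).extremePoints ℝ) := by
    rw [hKM]
    exact subset_convexHull ℝ A hx
  exact convexIndependent_set_iff_notMem_convexHull_sdiff.1 hci x hx
    (convexHull_mono (subset_sdiff_singleton extremePoints_convexHull_subset hxe) hxK)

theorem ConvexIndependent.convexHull_eq_convexHull_iff (hci : ConvexIndependent ℝ ((↑) : E → V))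
    (hE : E.Finite) {B : Set V} (hA : A ⊆ E) (hB : B ⊆ E) :
    convexHull ℝ A = convexHull ℝ B ↔ A = B := by
  refine ⟨fun h => ?_, congrArg _⟩
  rw [← (hE.subset hA).extremePoints_convexHull_eq (hci.mono hA), h,
    (hE.subset hB).extremePoints_convexHull_eq (hci.mono hB)]

end ConvexIndependent

section DualPolytope

variable {N : ℕ} {ℛ₀ : Set (Set (Euc N))} {E : Set (Euc N)} {rmin : ℕ}

theorem iUnion_activeExt_subset_highRank (hE : E = extFam ℛ₀) (hEfin : E.Finite)
    (hrmin : ∀ Ω ∈ ℛ₀, rmin ≤ (Ω ∩ E).ncard) (d : Euc N) :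
    ⋃ Ω ∈ ℛ₀, activeExt Ω d ⊆ highRank E (⟪·, d⟫) rmin := by
  simp only [iUnion_subset_iff]
  rintro Ω hΩ x ⟨hx, hmax⟩
  refine ⟨hE ▸ mem_biUnion hΩ hx, (hrmin Ω hΩ).trans ?_⟩
  exact ncard_le_ncard (fun y hy => ⟨hy.2, hmax y hy.1⟩) (hEfin.subset (sep_subset _ _))

theorem highRank_subset_iUnion_activeExt (hEfin : E.Finite)
    (hci : ConvexIndependent ℝ ((↑) : E → Euc N)) (hr : 0 < rmin)
    (H2 : ∀ A ⊆ E, A.ncard = rmin → convexHull ℝ A ∈ ℛ₀) (d : Euc N) :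
    highRank E (⟪·, d⟫) rmin ⊆ ⋃ Ω ∈ ℛ₀, activeExt Ω d := by
  rintro x ⟨hxE, hx⟩
  obtain ⟨A, hxA, hAS, hAr⟩ :=
    exists_subsuperset_card_eq (s := {x}) (t := {w ∈ E | ⟪w, d⟫ ≤ ⟪x, d⟫})
      (singleton_subset_iff.2 ⟨hxE, le_rfl⟩) (by rwa [ncard_singleton]) hx
  have hAE : A ⊆ E := hAS.trans (sep_subset _ _)
  have hhalf : Convex ℝ {y : Euc N | ⟪y, d⟫ ≤ ⟪x, d⟫} :=
    convex_halfSpace_le ⟨fun a b => inner_add_left a b d, fun c y => real_inner_smul_left y d c⟩ _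
  refine mem_iUnion₂.2 ⟨_, H2 A hAE hAr, ?_, fun y hy => ?_⟩
  · rw [(hEfin.subset hAE).extremePoints_convexHull_eq (hci.mono hAE)]
    exact hxA rfl
  · exact convexHull_min (fun w hw => (hAS hw).2) hhalf hy

end DualPolytope

/-- Indices of the enumeration are 0-based: the paper's `x′_1,…,x′_k` is `x' 0, …, x' (k-1)`. -/
theorem smaller_hull_in_dual_iff_general {N : ℕ} (ℛ₀ : Set (Set (Euc N))) (hfin : ℛ₀.Finite)
    (hpoly : ∀ Ω ∈ ℛ₀, IsPolytope Ω)
    (E : Set (Euc N)) (hE : E = extFam ℛ₀) (R : ℕ) (hR : R = E.ncard)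
    (rmin : ℕ) (hrmin : IsLeast {r : ℕ | ∃ Ω ∈ ℛ₀, r = (Ω ∩ E).ncard} rmin)
    (H1 : ∀ x ∈ E, x ∉ convexHull ℝ (E \ {x}))
    (H2 : ∀ A ⊆ E, A.ncard = rmin → convexHull ℝ A ∈ ℛ₀)
    (k : ℕ) (hk2 : k < rmin)
    (xs : Fin k → Euc N) (hxsinj : Function.Injective xs) (hxsE : ∀ j, xs j ∈ E) :
    (∃ dk ∈ sph N, convexHull ℝ (E \ Set.range xs) = dualPoly ℛ₀ dk) ↔
      (∃ dk ∈ sph N, ∃ x' : ℕ → Euc N, IsCompatEnum E R dk x' ∧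
        (∀ j < k, ⟪x' j, dk⟫ < ⟪x' k, dk⟫) ∧
        (∀ j : ℕ, k ≤ j → j < rmin → ⟪x' j, dk⟫ = ⟪x' k, dk⟫) ∧
        x' '' (Set.Iio k) = Set.range xs) := by
  have hEfin : E.Finite := hE ▸ hfin.biUnion fun Ω hΩ => (hpoly Ω hΩ).2.2.2
  have hci : ConvexIndependent ℝ ((↑) : E → Euc N) :=
    convexIndependent_set_iff_notMem_convexHull_sdiff.2 H1
  have hrlb : ∀ Ω ∈ ℛ₀, rmin ≤ (Ω ∩ E).ncard := fun Ω hΩ => hrmin.2 ⟨Ω, hΩ, rfl⟩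
  have hrR : rmin ≤ R := by
    obtain ⟨Ω, -, hΩ⟩ := hrmin.1
    exact hR ▸ hΩ ▸ ncard_le_ncard inter_subset_right hEfin
  have hXE : range xs ⊆ E := range_subset_iff.2 hxsE
  have hXk : (range xs).ncard = k := by
    rw [ncard_range_of_injective hxsinj, Nat.card_eq_fintype_card, Fintype.card_fin]
  refine exists_congr fun d => and_congr_right fun _ => ?_
  have hdual : dualPoly ℛ₀ d = convexHull ℝ (highRank E (⟪·, d⟫) rmin) :=
    congrArg _ ((iUnion_activeExt_subset_highRank hE hEfin hrlb d).antisymm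
      (highRank_subset_iUnion_activeExt hEfin hci (by omega) H2 d))
  have hHE : highRank E (⟪·, d⟫) rmin ⊆ E := sep_subset _ _
  rw [hdual, hci.convexHull_eq_convexHull_iff hEfin sdiff_subset hHE,
    sdiff_eq_highRank_iff_isRankCut hEfin hXE (hXk.trans_lt hk2),
    ← exists_isSortedEnum_iff_isRankCut hEfin hR.symm hXE hXk hk2 hrR]
  rfl -- `IsCompatEnum E R d` unfolds to `IsSortedEnum E R (⟪·, d⟫)`

/-- Proposition `carack`. Indices of the enumeration are 0-based:
the paper's `x′_1,…,x′_k` is `x' 0, …, x' (k-1)` here. -/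
theorem smaller_hull_in_dual_iff {N : ℕ} (ℛ₀ : Set (Set (Euc N))) (hfin : ℛ₀.Finite)
    (hpoly : ∀ Ω ∈ ℛ₀, IsPolytope Ω)
    (E : Set (Euc N)) (hE : E = extFam ℛ₀) (R : ℕ) (hR : R = E.ncard)
    (rmin : ℕ) (hrmin : IsLeast {r : ℕ | ∃ Ω ∈ ℛ₀, r = (Ω ∩ E).ncard} rmin)
    (H1 : ∀ x ∈ E, x ∉ convexHull ℝ (E \ {x}))
    (H2 : ∀ A ⊆ E, A.ncard = rmin → convexHull ℝ A ∈ ℛ₀)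
    (k : ℕ) (hk1 : 1 ≤ k) (hk2 : k < rmin)
    (xs : Fin k → Euc N) (hxsinj : Function.Injective xs) (hxsE : ∀ j, xs j ∈ E) :
    (∃ dk ∈ sph N, convexHull ℝ (E \ Set.range xs) = dualPoly ℛ₀ dk) ↔
      (∃ dk ∈ sph N, ∃ x' : ℕ → Euc N, IsCompatEnum E R dk x' ∧
        (∀ j < k, ⟪x' j, dk⟫ < ⟪x' k, dk⟫) ∧
        (∀ j : ℕ, k ≤ j → j < rmin → ⟪x' j, dk⟫ = ⟪x' k, dk⟫) ∧
        x' '' (Set.Iio k) = Set.range xs) :=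
  smaller_hull_in_dual_iff_general ℛ₀ hfin hpoly E hE R hR rmin hrmin H1 H2 k hk2 xs hxsinj hxsE
end
end

section
/- Let ℜ₀ be a finite family of polytopes in ℝ^N satisfying (H1) and (H2). Then ℜ₁ = F(ℜ₀) does not contain any polytope of the form conv(E \ {x₁,…,x_k}) where x₁,…,x_k ∈ E are distinct and k ≥ r_min; that is, for every d ∈ S and every set {x₁,…,x_k} of k ≥ r_min distinct points of E, Ω_{ℜ₀}(d) ≠ conv(E \ {x₁,…,x_k}). -/
/-!
Choose `B ⊆ A` with `card B = r_min`. By (H2), `conv B ∈ ℜ₀`, so it is a (nonempty, compact)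
polytope and has a `d`-active extreme point `x`. Extreme points of `conv B` lie in `B ⊆ A`, so
`x ∈ Ω_{ℜ₀}(d)`. If `Ω_{ℜ₀}(d) = conv (E \ A)`, then `x ∈ conv (E \ {x})`, contradicting (H1).
-/

open scoped RealInnerProductSpace
open Set

noncomputable section

/-- The face of `s` on which `l` is maximal is exposed, hence compact and extreme, so by
Krein–Milman it has an extreme point, which is an extreme point of `s`. -/
theorem IsCompact.exists_mem_extremePoints_forall_le {V : Type*} [AddCommGroup V] [Module ℝ V]
    [TopologicalSpace V] [T2Space V] [IsTopologicalAddGroup V] [ContinuousSMul ℝ V]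
    [LocallyConvexSpace ℝ V] {s : Set V} (hs : IsCompact s) (hne : s.Nonempty)
    (l : StrongDual ℝ V) : ∃ x ∈ s.extremePoints ℝ, ∀ y ∈ s, l y ≤ l x := by
  have hexp : IsExposed ℝ s (l.toExposed s) := ContinuousLinearMap.toExposed.isExposed
  obtain ⟨z, hzs, hz⟩ := hs.exists_isMaxOn hne l.continuous.continuousOn
  obtain ⟨x, hx⟩ := (hexp.isCompact hs).extremePoints_nonempty ⟨z, hzs, fun y hy => hz hy⟩
  exact ⟨x, hexp.isExtreme.extremePoints_subset_extremePoints hx, hx.1.2⟩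

theorem IsPolytope.activeExt_nonempty {N : ℕ} {Ω : Set (Euc N)} (hΩ : IsPolytope Ω)
    (d : Euc N) : (activeExt Ω d).Nonempty := by
  obtain ⟨x, hx, hmax⟩ := hΩ.2.2.1.exists_mem_extremePoints_forall_le hΩ.1 (innerSL ℝ d)
  exact ⟨x, hx, fun y hy => by simpa only [innerSL_apply_apply, real_inner_comm d] using hmax y hy⟩

theorem activeExt_convexHull_subset {N : ℕ} (B : Set (Euc N)) (d : Euc N) :
    activeExt (convexHull ℝ B) d ⊆ B :=
  fun _ hx => extremePoints_convexHull_subset hx.1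

theorem activeExt_subset_dualPoly {N : ℕ} {ℛ : Set (Set (Euc N))} {Ω : Set (Euc N)}
    (hΩ : Ω ∈ ℛ) (d : Euc N) : activeExt Ω d ⊆ dualPoly ℛ d :=
  (subset_biUnion_of_mem (u := fun Ω => activeExt Ω d) hΩ).trans (subset_convexHull ℝ _)

theorem no_small_complement_in_dual_general {N : ℕ} (ℛ₀ : Set (Set (Euc N)))
    (hpoly : ∀ Ω ∈ ℛ₀, IsPolytope Ω)
    (E : Set (Euc N))
    (rmin : ℕ)
    (H1 : ∀ x ∈ E, x ∉ convexHull ℝ (E \ {x}))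
    (H2 : ∀ A ⊆ E, A.ncard = rmin → convexHull ℝ A ∈ ℛ₀) :
    ∀ d ∈ sph N, ∀ A ⊆ E, rmin ≤ A.ncard →
      dualPoly ℛ₀ d ≠ convexHull ℝ (E \ A) := by
  intro d _ A hA hcard heq
  obtain ⟨B, hBA, hBcard⟩ := exists_subset_card_eq hcard
  have hBmem : convexHull ℝ B ∈ ℛ₀ := H2 B (hBA.trans hA) hBcard
  obtain ⟨x, hx⟩ := (hpoly _ hBmem).activeExt_nonempty d
  have hxA : x ∈ A := hBA (activeExt_convexHull_subset B d hx)
  have hxdual : x ∈ convexHull ℝ (E \ A) := heq ▸ activeExt_subset_dualPoly hBmem d hx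
  exact H1 x (hA hxA)
    (convexHull_mono (sdiff_subset_sdiff_right (singleton_subset_iff.2 hxA)) hxdual)

/-- Proposition `factminpol`: `ℜ₁` contains no polytope of the form
`conv (E \ A)` with `A ⊆ E` of cardinality at least `r_min`. -/
theorem no_small_complement_in_dual {N : ℕ} (ℛ₀ : Set (Set (Euc N))) (hfin : ℛ₀.Finite)
    (hpoly : ∀ Ω ∈ ℛ₀, IsPolytope Ω)
    (E : Set (Euc N)) (hE : E = extFam ℛ₀)
    (rmin : ℕ) (hrmin : IsLeast {r : ℕ | ∃ Ω ∈ ℛ₀, r = (Ω ∩ E).ncard} rmin)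
    (H1 : ∀ x ∈ E, x ∉ convexHull ℝ (E \ {x}))
    (H2 : ∀ A ⊆ E, A.ncard = rmin → convexHull ℝ A ∈ ℛ₀) :
    ∀ d ∈ sph N, ∀ A ⊆ E, rmin ≤ A.ncard →
      dualPoly ℛ₀ d ≠ convexHull ℝ (E \ A) :=
  no_small_complement_in_dual_general ℛ₀ hpoly E rmin H1 H2
end
end

section
/- (Polytopes of ℜ₂.) Let ℜ₀ be a finite family of polytopes in ℝ^N satisfying (H1) and (H2) with 1 < r_min < R, let d₀ ∈ S, and let {x′_i}_{i=1}^R be a d₀-compatible enumeration of E such that Ω_{ℜ₁,1}(d₀) := Ω_{ℜ₀}(d₀) = conv(E \ {x′_1,…,x′_k}) for some 0 ≤ k < r_min. Then, with ℓ = max{i : ⟨x′_i,d₀⟩ = ⟨x′_{r_min},d₀⟩} (so ℓ ∈ {r_min,…,R}), one has Ω_{ℜ₁}(−d₀) = conv({x′_1,…,x′_ℓ}), where ℜ₁ = F(ℜ₀). In particular every polytope of ℜ₂ = F(ℜ₁) contains at least r_min points of E. -/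
open scoped RealInnerProductSpace
open Set

noncomputable section

/-!
Under (H1) and (H2), `Ω_ℜ₀(d)` is the convex hull of `atLeastBelow E r d` (with `r = r_min`),
the points of `E` with at least `r` points of `E` weakly below them in direction `d`: such a
point `x` is active on the simplex spanned by `x` and `r - 1` points below it. Fewer than `r`
points of `E` lie outside `atLeastBelow E r d`, and the points strictly `f`-above an
`f`-maximizer of `atLeastBelow E r d` are among them. Conversely, every `y ∈ E` with fewer than
`r` points strictly `f`-above it is such a maximizer for some `d`: separate `y` from
`conv (E \ {y})` by `d₁` and turn the direction `t • d₁ - f`; as `t` grows the other points of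
`E` pass below `y` one by one, and stopping once `r - 1` have passed makes `y` active while no
point `f`-above `y` has `r` points below it. Hence `Ω_ℜ₁(f) = conv (fewerAbove E r f)`; this hull
contains the `r` topmost points of `E` in direction `f`, and for `f = -d₀` it is
`conv {x'₁, …, x'_ℓ}`.
-/

section ConvexGeometry

variable {V : Type*}

theorem ConvexIndependent.extremePoints_convexHull [NormedAddCommGroup V] [NormedSpace ℝ V]
    {S : Set V} (hS : S.Finite) (hc : ConvexIndependent ℝ ((↑) : S → V)) :
    (convexHull ℝ S).extremePoints ℝ = S := by
  refine extremePoints_convexHull_subset.antisymm fun x hx => ?_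
  by_contra hext
  have hsub : (convexHull ℝ S).extremePoints ℝ ⊆ S \ {x} := fun y hy =>
    ⟨extremePoints_convexHull_subset hy, fun hyx => hext (hyx ▸ hy)⟩
  -- Krein–Milman: `conv S` is the closed convex hull of its extreme points.
  have hKM := closure_minimal (convexHull_mono hsub)
    ((hS.subset sdiff_subset).isClosed_convexHull ℝ)
  rw [closure_convexHull_extremePoints (hS.isCompact_convexHull ℝ) (convex_convexHull ℝ S)] at hKM
  exact convexIndependent_set_iff_notMem_convexHull_sdiff.1 hc x hx
    (hKM (subset_convexHull ℝ S hx))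

variable [NormedAddCommGroup V] [InnerProductSpace ℝ V]

theorem exists_forall_inner_lt_of_notMem [CompleteSpace V] {C : Set V} (hconv : Convex ℝ C)
    (hclosed : IsClosed C) {y : V} (hy : y ∉ C) : ∃ d : V, ∀ z ∈ C, ⟪z, d⟫ < ⟪y, d⟫ := by
  obtain ⟨φ, u, hφ, hu⟩ := geometric_hahn_banach_closed_point hconv hclosed hy
  have hφ_inner : ∀ w, ⟪w, (InnerProductSpace.toDual ℝ V).symm φ⟫ = φ w := fun w => by
    rw [real_inner_comm, InnerProductSpace.toDual_symm_apply]
  exact ⟨(InnerProductSpace.toDual ℝ V).symm φ, fun z hz => by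
    simpa only [hφ_inner] using (hφ z hz).trans hu⟩

theorem convex_setOf_inner_le (f : V) (c : ℝ) : Convex ℝ {w : V | ⟪w, f⟫ ≤ c} :=
  convex_halfSpace_le ⟨fun a b => inner_add_left a b f, fun s a => real_inner_smul_left a f s⟩ c

end ConvexGeometry

section OrderStatistic

variable {α : Type*} {S : Set α}

theorem Set.Finite.exists_order_statistic (hS : S.Finite) (v : α → ℝ) {m : ℕ} (hm : 0 < m)
    (hmS : m ≤ S.ncard) :
    ∃ t, m ≤ {x ∈ S | v x ≤ t}.ncard ∧ {x ∈ S | v x < t}.ncard < m := by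
  set T := {x ∈ S | m ≤ {z ∈ S | v z ≤ v x}.ncard}
  have hTne : T.Nonempty := by
    obtain ⟨b, hb, hmax⟩ := S.exists_max_image v hS (nonempty_of_ncard_ne_zero (by omega))
    exact ⟨b, hb, by rwa [sep_eq_self_iff_mem_true.2 hmax]⟩
  obtain ⟨x₀, hx₀, hmin⟩ := T.exists_min_image v (hS.subset (sep_subset _ _)) hTne
  refine ⟨v x₀, hx₀.2, ?_⟩
  by_contra! hW
  obtain ⟨w, hw, hwmax⟩ := exists_max_image {z ∈ S | v z < v x₀} v
    (hS.subset (sep_subset _ _)) (nonempty_of_ncard_ne_zero (by omega))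
  have hwT : w ∈ T := ⟨hw.1, hW.trans <|
    ncard_le_ncard (fun z hz => ⟨hz.1, hwmax z hz⟩) (hS.subset (sep_subset _ _))⟩
  exact (hmin w hwT).not_gt hw.2

theorem Set.Finite.exists_order_statistic_ge (hS : S.Finite) (v : α → ℝ) {m : ℕ} (c : ℝ)
    (hc : {x ∈ S | v x < c}.ncard ≤ m) (hmS : m ≤ S.ncard) :
    ∃ t, c ≤ t ∧ m ≤ {x ∈ S | v x ≤ t}.ncard ∧ {x ∈ S | v x < t}.ncard ≤ m := by
  rcases Nat.eq_zero_or_pos m with rfl | hm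
  · exact ⟨c, le_rfl, Nat.zero_le _, hc⟩
  obtain ⟨t, hle, hlt⟩ := hS.exists_order_statistic v hm hmS
  refine ⟨max c t, le_max_left c t, hle.trans <| ncard_le_ncard
    (fun x hx => ⟨hx.1, hx.2.trans (le_max_right c t)⟩) (hS.subset (sep_subset _ _)), ?_⟩
  rcases le_total c t with h | h
  · rw [max_eq_right h]
    exact hlt.le
  · rwa [max_eq_left h]

end OrderStatistic

section RankSets

variable {V : Type*} [NormedAddCommGroup V] [InnerProductSpace ℝ V] {E : Set V} {r : ℕ}

def atLeastBelow (E : Set V) (r : ℕ) (d : V) : Set V :=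
  {x ∈ E | r ≤ {y ∈ E | ⟪y, d⟫ ≤ ⟪x, d⟫}.ncard}

def fewerAbove (E : Set V) (r : ℕ) (f : V) : Set V :=
  {x ∈ E | {y ∈ E | ⟪x, f⟫ < ⟪y, f⟫}.ncard < r}

theorem mem_atLeastBelow {x d : V} :
    x ∈ atLeastBelow E r d ↔ x ∈ E ∧ r ≤ {y ∈ E | ⟪y, d⟫ ≤ ⟪x, d⟫}.ncard := Iff.rfl

theorem atLeastBelow_subset (d : V) : atLeastBelow E r d ⊆ E := sep_subset _ _

theorem fewerAbove_subset (f : V) : fewerAbove E r f ⊆ E := sep_subset _ _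

theorem mem_atLeastBelow_of_forall_inner_le (hrE : r ≤ E.ncard) {y d : V} (hy : y ∈ E)
    (h : ∀ z ∈ E, ⟪z, d⟫ ≤ ⟪y, d⟫) : y ∈ atLeastBelow E r d :=
  ⟨hy, by rwa [sep_eq_self_iff_mem_true.2 h]⟩

theorem atLeastBelow_zero (hrE : r ≤ E.ncard) : atLeastBelow E r 0 = E :=
  (atLeastBelow_subset 0).antisymm fun y hy =>
    mem_atLeastBelow_of_forall_inner_le hrE hy fun z _ => by simp

theorem atLeastBelow_smul {c : ℝ} (hc : 0 < c) (d : V) :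
    atLeastBelow E r (c • d) = atLeastBelow E r d := by
  simp only [atLeastBelow, real_inner_smul_right, mul_le_mul_iff_right₀ hc]

theorem ncard_sdiff_atLeastBelow_lt (hE : E.Finite) (hr : 0 < r) (d : V) :
    (E \ atLeastBelow E r d).ncard < r := by
  by_contra! h
  obtain ⟨b, hb, hmax⟩ := exists_max_image (E \ atLeastBelow E r d) (fun y => ⟪y, d⟫)
    (hE.subset sdiff_subset) (nonempty_of_ncard_ne_zero (by omega))
  exact hb.2 ⟨hb.1, h.trans <|
    ncard_le_ncard (fun z hz => ⟨hz.1, hmax z hz⟩) (hE.subset (sep_subset _ _))⟩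

theorem mem_fewerAbove_of_forall_inner_le (hE : E.Finite) (hr : 0 < r) {x d f : V}
    (hx : x ∈ atLeastBelow E r d) (hmax : ∀ z ∈ atLeastBelow E r d, ⟪z, f⟫ ≤ ⟪x, f⟫) :
    x ∈ fewerAbove E r f := by
  refine ⟨hx.1, (ncard_le_ncard (fun z hz => ?_) (hE.subset sdiff_subset)).trans_lt
    (ncard_sdiff_atLeastBelow_lt hE hr d)⟩
  exact ⟨hz.1, fun hzG => (hmax z hzG).not_gt hz.2⟩

theorem le_ncard_fewerAbove (hE : E.Finite) (hrE : r ≤ E.ncard) (f : V) :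
    r ≤ (fewerAbove E r f).ncard := by
  by_contra! hlt
  have hne : (E \ fewerAbove E r f).Nonempty := by
    refine nonempty_iff_ne_empty.2 fun h => ?_
    have := ncard_le_ncard (sdiff_eq_empty.1 h) (hE.subset (fewerAbove_subset f))
    omega
  obtain ⟨y, hy, hmax⟩ := exists_max_image _ (fun y => ⟪y, f⟫) (hE.subset sdiff_subset) hne
  refine hy.2 ⟨hy.1, (ncard_le_ncard (fun z hz => ?_)
    (hE.subset (fewerAbove_subset f))).trans_lt hlt⟩
  by_contra hzY
  exact (hmax z ⟨hz.1, hzY⟩).not_gt hz.2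

end RankSets

section Rotation

variable {V : Type*} [NormedAddCommGroup V] [InnerProductSpace ℝ V] {E : Set V} {r : ℕ}

theorem exists_mem_atLeastBelow_smul_sub (hE : E.Finite) (hr : 0 < r) (hrE : r ≤ E.ncard)
    {y d₁ f : V} (hd₁ : ∀ z ∈ E \ {y}, ⟪z, d₁⟫ < ⟪y, d₁⟫) (hy : y ∈ fewerAbove E r f) :
    ∃ t : ℝ, y ∈ atLeastBelow E r (t • d₁ - f) ∧
      ∀ z ∈ atLeastBelow E r (t • d₁ - f), ⟪z, f⟫ ≤ ⟪y, f⟫ := by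
  set τ : V → ℝ := fun z => (⟪y, f⟫ - ⟪z, f⟫) / (⟪y, d₁⟫ - ⟪z, d₁⟫)
  have hgap : ∀ z ∈ E \ {y}, 0 < ⟪y, d₁⟫ - ⟪z, d₁⟫ := fun z hz => sub_pos.2 (hd₁ z hz)
  have hle_iff : ∀ t : ℝ, ∀ z ∈ E \ {y}, ⟪z, t • d₁ - f⟫ ≤ ⟪y, t • d₁ - f⟫ ↔ τ z ≤ t := by
    intro t z hz
    rw [div_le_iff₀ (hgap z hz)]
    simp only [inner_sub_right, real_inner_smul_right]
    constructor <;> intro h <;> linarith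
  have hlt_iff : ∀ t : ℝ, ∀ z ∈ E \ {y}, ⟪z, t • d₁ - f⟫ < ⟪y, t • d₁ - f⟫ ↔ τ z < t := by
    intro t z hz
    rw [div_lt_iff₀ (hgap z hz)]
    simp only [inner_sub_right, real_inner_smul_right]
    constructor <;> intro h <;> linarith
  have hneg_iff : ∀ z ∈ E \ {y}, τ z < 0 ↔ ⟪y, f⟫ < ⟪z, f⟫ := fun z hz => by
    rw [div_lt_iff₀ (hgap z hz), zero_mul, sub_neg]
  have hEy : (E \ {y}).Finite := hE.subset sdiff_subset
  have hfew : {z ∈ E \ {y} | τ z < 0}.ncard ≤ r - 1 := by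
    have hsub : {z ∈ E \ {y} | τ z < 0} ⊆ {z ∈ E | ⟪y, f⟫ < ⟪z, f⟫} :=
      fun z hz => ⟨hz.1.1, (hneg_iff z hz.1).1 hz.2⟩
    have := (ncard_le_ncard hsub (hE.subset (sep_subset _ _))).trans_lt hy.2
    omega
  have hmany : r - 1 ≤ (E \ {y}).ncard := by
    rw [ncard_sdiff_singleton_of_mem hy.1]
    omega
  -- `t` is an order statistic of the times `τ z` at which the points `z ≠ y` pass below `y`,
  -- clamped at `0` so that every point `f`-above `y` has already passed.
  obtain ⟨t, ht, hle, hlt⟩ := hEy.exists_order_statistic_ge τ 0 hfew hmany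
  refine ⟨t, mem_atLeastBelow.2 ⟨hy.1, ?_⟩, fun z hz => ?_⟩
  · calc r ≤ (insert y {z ∈ E \ {y} | τ z ≤ t}).ncard := by
          rw [ncard_insert_of_notMem (fun h => h.1.2 rfl) (hEy.subset (sep_subset _ _))]
          omega
      _ ≤ {z ∈ E | ⟪z, t • d₁ - f⟫ ≤ ⟪y, t • d₁ - f⟫}.ncard := ncard_le_ncard
          (insert_subset ⟨hy.1, le_rfl⟩ fun z hz => ⟨hz.1.1, (hle_iff t z hz.1).2 hz.2⟩)
          (hE.subset (sep_subset _ _))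
  · by_contra! hzf
    have hz' : z ∈ E \ {y} := ⟨hz.1, by rintro rfl; exact hzf.false⟩
    have hzy := (hlt_iff t z hz').2 (((hneg_iff z hz').2 hzf).trans_le ht)
    have hbelow : {w ∈ E | ⟪w, t • d₁ - f⟫ ≤ ⟪z, t • d₁ - f⟫} ⊆ {w ∈ E \ {y} | τ w < t} := by
      intro w hw
      have hwy := hw.2.trans_lt hzy
      have hw' : w ∈ E \ {y} := ⟨hw.1, by rintro rfl; exact hwy.false⟩
      exact ⟨hw', (hlt_iff t w hw').1 hwy⟩
    have := hz.2.trans (ncard_le_ncard hbelow (hEy.subset (sep_subset _ _)))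
    omega

theorem exists_ne_zero_mem_atLeastBelow [CompleteSpace V] (hE : E.Finite) (hr : 0 < r)
    (hrE : r < E.ncard) {y f : V} (hyE : y ∉ convexHull ℝ (E \ {y})) (hy : y ∈ fewerAbove E r f) :
    ∃ d ≠ 0, y ∈ atLeastBelow E r d ∧ ∀ z ∈ atLeastBelow E r d, ⟪z, f⟫ ≤ ⟪y, f⟫ := by
  obtain ⟨d₁, hd₁⟩ := exists_forall_inner_lt_of_notMem (convex_convexHull ℝ _)
    ((hE.subset sdiff_subset).isClosed_convexHull ℝ) hyE
  replace hd₁ : ∀ z ∈ E \ {y}, ⟪z, d₁⟫ < ⟪y, d₁⟫ := fun z hz => hd₁ z (subset_convexHull ℝ _ hz)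
  obtain ⟨t, hyG, hmax⟩ := exists_mem_atLeastBelow_smul_sub hE hr hrE.le hd₁ hy
  rcases ne_or_eq (t • d₁ - f) 0 with hd | hd
  · exact ⟨_, hd, hyG, hmax⟩
  -- `t • d₁ = f`, so `y` maximizes `f` on all of `E`, and the separating direction `d₁` works.
  rw [hd, atLeastBelow_zero hrE.le] at hmax
  obtain ⟨z, hz, hzy⟩ := exists_ne_of_one_lt_ncard (by omega : 1 < E.ncard) y
  refine ⟨d₁, ?_, mem_atLeastBelow_of_forall_inner_le hrE.le hy.1 fun w hw => ?_,
    fun w hw => hmax w (atLeastBelow_subset d₁ hw)⟩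
  · rintro rfl
    simpa using hd₁ z ⟨hz, hzy⟩
  · rcases eq_or_ne w y with rfl | hwy
    · exact le_rfl
    · exact (hd₁ w ⟨hw, hwy⟩).le

end Rotation

section Family

variable {N : ℕ} {E : Set (Euc N)} {r : ℕ}

theorem activeExt_convexHull {S : Set (Euc N)} (hS : S.Finite)
    (hc : ConvexIndependent ℝ ((↑) : S → Euc N)) (f : Euc N) :
    activeExt (convexHull ℝ S) f = {x ∈ S | ∀ z ∈ S, ⟪z, f⟫ ≤ ⟪x, f⟫} := by
  ext x
  simp only [activeExt, hc.extremePoints_convexHull hS]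
  refine and_congr_right fun _ => ⟨fun h z hz => h z (subset_convexHull ℝ S hz), fun h => ?_⟩
  exact fun w hw => convexHull_min h (convex_setOf_inner_le f _) hw

theorem dualPoly_eq_convexHull_atLeastBelow {ℛ : Set (Set (Euc N))} (hE : E.Finite)
    (hext : extFam ℛ ⊆ E) (hlb : ∀ Ω ∈ ℛ, r ≤ (Ω ∩ E).ncard)
    (hc : ConvexIndependent ℝ ((↑) : E → Euc N))
    (hsimplex : ∀ A ⊆ E, A.ncard = r → convexHull ℝ A ∈ ℛ) (hr : 0 < r) (d : Euc N) :
    dualPoly ℛ d = convexHull ℝ (atLeastBelow E r d) := by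
  rw [dualPoly]
  congr 1
  ext x
  simp only [mem_iUnion, exists_prop]
  constructor
  · rintro ⟨Ω, hΩ, hxΩ, hmax⟩
    refine mem_atLeastBelow.2 ⟨hext (mem_biUnion hΩ hxΩ), (hlb Ω hΩ).trans ?_⟩
    exact ncard_le_ncard (fun y hy => ⟨hy.2, hmax y hy.1⟩) (hE.subset (sep_subset _ _))
  · rintro ⟨hxE, hcount⟩
    obtain ⟨A, hxA, hA, hAcard⟩ := exists_subsuperset_card_eq
      (singleton_subset_iff.2 (show x ∈ {y ∈ E | ⟪y, d⟫ ≤ ⟪x, d⟫} from ⟨hxE, le_rfl⟩))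
      (by rw [ncard_singleton]; omega) hcount
    have hAE : A ⊆ E := hA.trans (sep_subset _ _)
    refine ⟨convexHull ℝ A, hsimplex A hAE hAcard, ?_⟩
    rw [activeExt_convexHull (hE.subset hAE) (hc.mono hAE)]
    exact ⟨singleton_subset_iff.1 hxA, fun z hz => (hA hz).2⟩

theorem dualPoly_dualFam_eq_convexHull_fewerAbove {ℛ : Set (Set (Euc N))} (hE : E.Finite)
    (hext : extFam ℛ ⊆ E) (hlb : ∀ Ω ∈ ℛ, r ≤ (Ω ∩ E).ncard)
    (hc : ConvexIndependent ℝ ((↑) : E → Euc N))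
    (hsimplex : ∀ A ⊆ E, A.ncard = r → convexHull ℝ A ∈ ℛ) (hr : 0 < r) (hrE : r < E.ncard)
    (f : Euc N) :
    dualPoly (dualFam ℛ) f = convexHull ℝ (fewerAbove E r f) := by
  have hact : ∀ d, activeExt (dualPoly ℛ d) f =
      {x ∈ atLeastBelow E r d | ∀ z ∈ atLeastBelow E r d, ⟪z, f⟫ ≤ ⟪x, f⟫} := fun d => by
    rw [dualPoly_eq_convexHull_atLeastBelow hE hext hlb hc hsimplex hr,
      activeExt_convexHull (hE.subset (atLeastBelow_subset d)) (hc.mono (atLeastBelow_subset d))]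
  rw [dualPoly, dualFam, biUnion_image]
  congr 1
  ext x
  simp only [mem_iUnion, exists_prop, hact]
  constructor
  · rintro ⟨d, -, hx, hmax⟩
    exact mem_fewerAbove_of_forall_inner_le hE hr hx hmax
  · intro hx
    obtain ⟨d, hd, hxd, hmax⟩ := exists_ne_zero_mem_atLeastBelow hE hr hrE
      (convexIndependent_set_iff_notMem_convexHull_sdiff.1 hc x (fewerAbove_subset f hx)) hx
    refine ⟨‖d‖⁻¹ • d, ?_, ?_⟩
    · rw [sph, mem_sphere_zero_iff_norm, norm_smul, norm_inv, norm_norm,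
        inv_mul_cancel₀ (norm_ne_zero_iff.2 hd)]
    · rw [atLeastBelow_smul (inv_pos.2 (norm_pos_iff.2 hd))]
      exact ⟨hxd, hmax⟩

end Family

namespace IsCompatEnum

variable {N : ℕ} {E : Set (Euc N)} {R r : ℕ} {d : Euc N} {x : ℕ → Euc N}

theorem fewerAbove_neg_eq (hx : IsCompatEnum E R d x) (hr : 0 < r) (hrR : r ≤ R) :
    fewerAbove E r (-d) = {y ∈ E | ⟪y, d⟫ ≤ ⟪x (r - 1), d⟫} := by
  obtain ⟨hinj, himg, hmono⟩ := hx
  have hE : E.Finite := himg ▸ (finite_Iio R).image x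
  ext y
  simp only [fewerAbove, inner_neg_right, neg_lt_neg_iff]
  refine and_congr_right fun hy => ⟨fun hcard => ?_, fun hle => ?_⟩
  · by_contra! hgt
    have hsub : x '' Iic (r - 1) ⊆ {w ∈ E | ⟪w, d⟫ < ⟪y, d⟫} := by
      rintro _ ⟨i, hi, rfl⟩
      have hiR : i < R := by simp only [mem_Iic] at hi; omega
      exact ⟨himg ▸ mem_image_of_mem x hiR, (hmono i (r - 1) hi (by omega)).trans_lt hgt⟩
    have := ncard_le_ncard hsub (hE.subset (sep_subset _ _))
    have hinj' : InjOn x (Iic (r - 1)) :=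
      hinj.mono fun i (hi : i ∈ Iic (r - 1)) => show i < R by rw [mem_Iic] at hi; omega
    rw [hinj'.ncard_image, ncard_Iic_nat] at this
    omega
  · have hsub : {w ∈ E | ⟪w, d⟫ < ⟪y, d⟫} ⊆ x '' Iio (r - 1) := by
      rintro w ⟨hw, hwy⟩
      obtain ⟨j, hj, rfl⟩ := himg.symm ▸ hw
      refine ⟨j, ?_, rfl⟩
      by_contra hjr
      exact (hwy.trans_le hle).not_ge (hmono _ _ (not_lt.1 hjr) hj)
    have := (ncard_le_ncard hsub ((finite_Iio _).image x)).trans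
      ((ncard_image_le (finite_Iio _)).trans (ncard_Iio_nat _).le)
    omega

theorem sep_inner_le_eq_image_Iic (hx : IsCompatEnum E R d x) {i ℓ : ℕ} (hiR : i < R)
    (hℓ : IsGreatest {j | j < R ∧ ⟪x j, d⟫ = ⟪x i, d⟫} ℓ) :
    {y ∈ E | ⟪y, d⟫ ≤ ⟪x i, d⟫} = x '' Iic ℓ := by
  obtain ⟨hinj, himg, hmono⟩ := hx
  obtain ⟨⟨hℓR, hℓi⟩, hℓmax⟩ := hℓ
  have hiℓ : i ≤ ℓ := hℓmax ⟨hiR, rfl⟩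
  ext y
  constructor
  · rintro ⟨hy, hyi⟩
    obtain ⟨j, hj, rfl⟩ := himg.symm ▸ hy
    refine ⟨j, mem_Iic.2 ?_, rfl⟩
    by_contra! hℓj
    have := hℓmax ⟨hj, le_antisymm hyi (hmono i j (by omega) hj)⟩
    omega
  · rintro ⟨j, hj, rfl⟩
    refine ⟨himg ▸ mem_image_of_mem x (show j < R by simp only [mem_Iic] at hj; omega), ?_⟩
    rcases le_total j i with hji | hij
    · exact hmono j i hji hiR
    · exact hℓi ▸ hmono j ℓ hj hℓR

end IsCompatEnum

/-- Indices of the enumeration are 0-based: the paper's `{x′_1,…,x′_ℓ}` is `x' '' (Set.Iic ℓ)`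
with `ℓ` 0-based, and `x′_{r_min}` is `x' (rmin - 1)`. -/
theorem dual_square_description_general {N : ℕ} (ℛ₀ : Set (Set (Euc N))) (hfin : ℛ₀.Finite)
    (hpoly : ∀ Ω ∈ ℛ₀, IsPolytope Ω)
    (E : Set (Euc N)) (hE : E = extFam ℛ₀) (R : ℕ) (hR : R = E.ncard)
    (rmin : ℕ) (hrmin : IsLeast {r : ℕ | ∃ Ω ∈ ℛ₀, r = (Ω ∩ E).ncard} rmin)
    (hrmin1 : 1 < rmin) (hrminR : rmin < R)
    (H1 : ∀ x ∈ E, x ∉ convexHull ℝ (E \ {x}))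
    (H2 : ∀ A ⊆ E, A.ncard = rmin → convexHull ℝ A ∈ ℛ₀)
    (d₀ : Euc N)
    (x' : ℕ → Euc N) (hx' : IsCompatEnum E R d₀ x')
    (ℓ : ℕ) (hℓ : IsGreatest {i : ℕ | i < R ∧ ⟪x' i, d₀⟫ = ⟪x' (rmin - 1), d₀⟫} ℓ) :
    dualPoly (dualFam ℛ₀) (-d₀) = convexHull ℝ (x' '' (Set.Iic ℓ)) ∧
      ∀ Ω ∈ dualFam (dualFam ℛ₀), rmin ≤ (Ω ∩ E).ncard := by
  subst hR
  have hEfin : E.Finite := hE ▸ hfin.biUnion fun Ω hΩ => (hpoly Ω hΩ).2.2.2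
  have hdual : ∀ f, dualPoly (dualFam ℛ₀) f = convexHull ℝ (fewerAbove E rmin f) :=
    dualPoly_dualFam_eq_convexHull_fewerAbove hEfin hE.ge (fun Ω hΩ => hrmin.2 ⟨Ω, hΩ, rfl⟩)
      (convexIndependent_set_iff_notMem_convexHull_sdiff.2 H1) H2 (by omega) hrminR
  refine ⟨?_, ?_⟩
  · rw [hdual, hx'.fewerAbove_neg_eq (by omega) hrminR.le,
      hx'.sep_inner_le_eq_image_Iic (by omega) hℓ]
  · rintro _ ⟨f, -, rfl⟩
    rw [hdual]
    calc rmin ≤ (fewerAbove E rmin f).ncard := le_ncard_fewerAbove hEfin hrminR.le f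
      _ ≤ _ := ncard_le_ncard (subset_inter (subset_convexHull ℝ _) (fewerAbove_subset f))
          (hEfin.subset inter_subset_right)

/-- Proposition on polytopes of `ℜ₂`. Indices of the enumeration are
0-based: the paper's `{x′_1,…,x′_ℓ}` is `x' '' (Set.Iic ℓ)` with `ℓ` 0-based, and
`x′_{r_min}` is `x' (rmin - 1)`. -/
theorem dual_square_description {N : ℕ} (ℛ₀ : Set (Set (Euc N))) (hfin : ℛ₀.Finite)
    (hpoly : ∀ Ω ∈ ℛ₀, IsPolytope Ω)
    (E : Set (Euc N)) (hE : E = extFam ℛ₀) (R : ℕ) (hR : R = E.ncard)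
    (rmin : ℕ) (hrmin : IsLeast {r : ℕ | ∃ Ω ∈ ℛ₀, r = (Ω ∩ E).ncard} rmin)
    (hrmin1 : 1 < rmin) (hrminR : rmin < R)
    (H1 : ∀ x ∈ E, x ∉ convexHull ℝ (E \ {x}))
    (H2 : ∀ A ⊆ E, A.ncard = rmin → convexHull ℝ A ∈ ℛ₀)
    (d₀ : Euc N) (hd₀ : d₀ ∈ sph N)
    (x' : ℕ → Euc N) (hx' : IsCompatEnum E R d₀ x')
    (k : ℕ) (hk : k < rmin)
    (hΩ₁ : dualPoly ℛ₀ d₀ = convexHull ℝ (E \ x' '' (Set.Iio k)))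
    (ℓ : ℕ) (hℓ : IsGreatest {i : ℕ | i < R ∧ ⟪x' i, d₀⟫ = ⟪x' (rmin - 1), d₀⟫} ℓ) :
    dualPoly (dualFam ℛ₀) (-d₀) = convexHull ℝ (x' '' (Set.Iic ℓ)) ∧
      ∀ Ω ∈ dualFam (dualFam ℛ₀), rmin ≤ (Ω ∩ E).ncard :=
  dual_square_description_general ℛ₀ hfin hpoly E hE R hR rmin hrmin hrmin1 hrminR H1 H2 d₀ x' hx' ℓ
    hℓ
end
end
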